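/- arXiv:2407.01778 — 10 statements merged into one kernel-verified Lean document; each statement's English description precedes it below -/
import Mathlib

section
/- Let N ≥ 4 be an integer and 0 < δ < 1/4. Let f be a real-valued function of class C¹ on [N, 2N] such that there exist λ₁ > 0 and c₁ ≥ 1 with λ₁ ≤ |f′(x)| ≤ c₁·λ₁ for all x ∈ [N, 2N]. Then R(f,N,δ) ≤ 2c₁·N·λ₁ + 4c₁·N·δ + 2δ/λ₁ + 1. -/
/-!
Group the integers `n ∈ [N, 2N]` with `‖f n‖ < δ` by the nearest integer `round (f n)`. Two members
of one group have values within `2δ` of each other, and since `|f'| ≥ λ` the mean value theorem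
puts them within `2δ/λ`, so a group has at most `2δ/λ + 1` members. Since `|f'| ≤ cλ`, the values
`f n` spread over at most `cλN`, so the nearest integers spread over at most `cλN + 2δ`; as two
distinct ones differ by at least `1 > 4δ`, this is below `2cλN`, leaving at most `2cλN + 1` groups.
-/

open Finset Set

theorem card_le_of_forall_sub_le (t : Finset ℤ) {B : ℝ} (hB : 0 ≤ B)
    (h : ∀ a ∈ t, ∀ b ∈ t, (a - b : ℝ) ≤ B) : (#t : ℝ) ≤ B + 1 := by
  rcases t.eq_empty_or_nonempty with rfl | ht
  · rw [Finset.card_empty, Nat.cast_zero]; linarith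
  have hspan : (t.max' ht - t.min' ht : ℝ) ≤ B := h _ (t.max'_mem ht) _ (t.min'_mem ht)
  have hcard : #t ≤ #(Finset.Icc (t.min' ht) (t.max' ht)) :=
    card_le_card fun a ha => Finset.mem_Icc.2 ⟨t.min'_le a ha, t.le_max' a ha⟩
  have hle := t.min'_le _ (t.max'_mem ht)
  rw [Int.card_Icc] at hcard
  calc (#t : ℝ) ≤ ((t.max' ht + 1 - t.min' ht : ℤ) : ℝ) := by exact_mod_cast (by omega)
    _ ≤ B + 1 := by push_cast; linarith

section NearIntegers

variable (s : Finset ℤ) (g : ℤ → ℝ) {δ : ℝ}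

theorem card_filter_round_eq_le {lam : ℝ} (hδ : 0 < δ) (hlam : 0 < lam)
    (hnear : ∀ n ∈ s, |g n - round (g n)| < δ)
    (hlower : ∀ m ∈ s, ∀ n ∈ s, lam * |(m - n : ℝ)| ≤ |g m - g n|) (k : ℤ) :
    (#(s.filter fun n => round (g n) = k) : ℝ) ≤ 2 * δ / lam + 1 := by
  refine card_le_of_forall_sub_le _ (by positivity) fun m hm n hn => ?_
  rw [Finset.mem_filter] at hm hn
  have hclose : |g m - g n| < 2 * δ := by
    calc |g m - g n| = |(g m - round (g m)) - (g n - round (g n))| := by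
          rw [hm.2, hn.2]; ring_nf
      _ ≤ |g m - round (g m)| + |g n - round (g n)| := abs_sub _ _
      _ < 2 * δ := by linarith [hnear m hm.1, hnear n hn.1]
  rw [le_div_iff₀ hlam]
  nlinarith [le_abs_self (m - n : ℝ), hlower m hm.1 n hn.1]

theorem card_image_round_le {A : ℝ} (hA : 0 ≤ A) (hδ : δ < 1 / 4)
    (hnear : ∀ n ∈ s, |g n - round (g n)| < δ)
    (hupper : ∀ m ∈ s, ∀ n ∈ s, |g m - g n| ≤ A) :
    (#(s.image fun n => round (g n)) : ℝ) ≤ 2 * A + 1 := by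
  refine card_le_of_forall_sub_le _ (by positivity) fun k hk l hl => ?_
  obtain ⟨m, hm, rfl⟩ := Finset.mem_image.1 hk
  obtain ⟨n, hn, rfl⟩ := Finset.mem_image.1 hl
  rcases eq_or_ne (round (g m)) (round (g n)) with heq | hne
  · rw [heq, sub_self]; positivity
  have hspread : |(round (g m) - round (g n) : ℝ)| ≤ 2 * δ + A := by
    calc |(round (g m) - round (g n) : ℝ)|
        = |(g n - round (g n)) - (g m - round (g m)) + (g m - g n)| := by ring_nf
      _ ≤ |g n - round (g n)| + |g m - round (g m)| + |g m - g n| :=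
          (abs_add_le _ _).trans (add_le_add_left (abs_sub _ _) _)
      _ ≤ 2 * δ + A := by linarith [hnear m hm, hnear n hn, hupper m hm n hn]
  -- distinct integers are at least `1 > 4δ` apart, so the spread `2δ + A` is below `2A`
  have hone : (1 : ℝ) ≤ |(round (g m) - round (g n) : ℝ)| := by
    exact_mod_cast Int.one_le_abs (sub_ne_zero.2 hne)
  linarith [le_abs_self (round (g m) - round (g n) : ℝ)]

theorem card_near_integers_le {lam A : ℝ} (hδ0 : 0 < δ) (hδ1 : δ < 1 / 4) (hlam : 0 < lam)
    (hA : 0 ≤ A) (hnear : ∀ n ∈ s, |g n - round (g n)| < δ)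
    (hupper : ∀ m ∈ s, ∀ n ∈ s, |g m - g n| ≤ A)
    (hlower : ∀ m ∈ s, ∀ n ∈ s, lam * |(m - n : ℝ)| ≤ |g m - g n|) :
    (#s : ℝ) ≤ (2 * A + 1) * (2 * δ / lam + 1) := by
  rw [card_eq_sum_card_image (fun n => round (g n)) s]
  push_cast
  calc ∑ k ∈ s.image (fun n => round (g n)), (#(s.filter fun n => round (g n) = k) : ℝ)
      ≤ #(s.image fun n => round (g n)) * (2 * δ / lam + 1) := by
        rw [← nsmul_eq_mul]
        exact sum_le_card_nsmul _ _ _ fun k _ =>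
          card_filter_round_eq_le s g hδ0 hlam hnear hlower k
    _ ≤ (2 * A + 1) * (2 * δ / lam + 1) :=
        mul_le_mul_of_nonneg_right (card_image_round_le s g hA hδ1 hnear hupper)
          (by positivity)

end NearIntegers

theorem mul_abs_sub_le_abs_sub_of_le_abs_derivWithin {f : ℝ → ℝ} {a b lam : ℝ}
    (hf : DifferentiableOn ℝ f (Icc a b))
    (hder : ∀ x ∈ Ioo a b, lam ≤ |derivWithin f (Icc a b) x|)
    {x y : ℝ} (hx : x ∈ Icc a b) (hy : y ∈ Icc a b) : lam * |y - x| ≤ |f y - f x| := by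
  wlog hxy : x < y generalizing x y
  · rcases (not_lt.1 hxy).eq_or_lt with rfl | hyx
    · simp
    · simpa [abs_sub_comm] using this hy hx hyx
  have hsub : Icc x y ⊆ Icc a b := Icc_subset_Icc hx.1 hy.2
  obtain ⟨ξ, hξ, hslope⟩ := exists_deriv_eq_slope f hxy (hf.continuousOn.mono hsub)
    (hf.mono (Ioo_subset_Icc_self.trans hsub))
  have hξab : ξ ∈ Ioo a b := ⟨hx.1.trans_lt hξ.1, hξ.2.trans_le hy.2⟩
  rw [← derivWithin_of_mem_nhds (Icc_mem_nhds hξab.1 hξab.2), eq_div_iff (sub_ne_zero.2 hxy.ne')]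
    at hslope
  rw [← hslope, abs_mul, abs_of_pos (sub_pos.2 hxy)]
  exact mul_le_mul_of_nonneg_right (hder ξ hξab) (sub_pos.2 hxy).le

theorem stmt_1_general (N : ℕ)
    (δ : ℝ) (hδ0 : 0 < δ) (hδ1 : δ < 1/4)
    (f : ℝ → ℝ) (lam c : ℝ) (hlam : 0 < lam) (hc : 1 ≤ c)
    (hf : ContDiffOn ℝ 1 f (Set.Icc (N:ℝ) (2*N)))
    (hder : ∀ x ∈ Set.Icc (N:ℝ) (2*N),
      lam ≤ |derivWithin f (Set.Icc (N:ℝ) (2*N)) x| ∧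
      |derivWithin f (Set.Icc (N:ℝ) (2*N)) x| ≤ c * lam) :
    (({n : ℤ | (N:ℤ) ≤ n ∧ n ≤ 2*N ∧ |f n - round (f n)| < δ}.ncard : ℝ)) ≤
      2 * c * N * lam + 4 * c * N * δ + 2 * δ / lam + 1 := by
  classical
  set s : Finset ℤ := (Finset.Icc (N : ℤ) (2 * N)).filter fun n => |f n - round (f n)| < δ
  have hs : {n : ℤ | (N:ℤ) ≤ n ∧ n ≤ 2*N ∧ |f n - round (f n)| < δ} = s := by
    ext n; simp [s, and_assoc]
  have hmem : ∀ n ∈ s, (n : ℝ) ∈ Icc (N : ℝ) (2 * N) := fun n hn => by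
    obtain ⟨h₁, h₂⟩ := Finset.mem_Icc.1 (Finset.mem_filter.1 hn).1
    exact ⟨by exact_mod_cast h₁, by exact_mod_cast h₂⟩
  have hdiff : DifferentiableOn ℝ f (Icc (N : ℝ) (2 * N)) := hf.differentiableOn one_ne_zero
  have hupper : ∀ m ∈ s, ∀ n ∈ s, |f m - f n| ≤ c * lam * N := fun m hm n hn => by
    have hlip := (convex_Icc _ _).norm_image_sub_le_of_norm_derivWithin_le hdiff
      (fun x hx => (hder x hx).2) (hmem n hn) (hmem m hm)
    have hdist : |(m - n : ℝ)| ≤ N := by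
      obtain ⟨hm₁, hm₂⟩ := hmem m hm
      obtain ⟨hn₁, hn₂⟩ := hmem n hn
      exact abs_sub_le_iff.2 ⟨by linarith, by linarith⟩
    calc |f m - f n| ≤ c * lam * |(m - n : ℝ)| := hlip
      _ ≤ c * lam * N := by gcongr
  have hlower : ∀ m ∈ s, ∀ n ∈ s, lam * |(m - n : ℝ)| ≤ |f m - f n| := fun m hm n hn =>
    mul_abs_sub_le_abs_sub_of_le_abs_derivWithin hdiff
      (fun x hx => (hder x (Ioo_subset_Icc_self hx)).1) (hmem n hn) (hmem m hm)
  rw [hs, ncard_coe_finset]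
  calc (#s : ℝ) ≤ (2 * (c * lam * N) + 1) * (2 * δ / lam + 1) :=
        card_near_integers_le s (fun n => f n) hδ0 hδ1 hlam (by positivity)
          (fun n hn => (Finset.mem_filter.1 hn).2) hupper hlower
    _ = 2 * c * N * lam + 4 * c * N * δ + 2 * δ / lam + 1 := by field_simp; ring

theorem stmt_1 (N : ℕ) (hN : 4 ≤ N)
    (δ : ℝ) (hδ0 : 0 < δ) (hδ1 : δ < 1/4)
    (f : ℝ → ℝ) (lam c : ℝ) (hlam : 0 < lam) (hc : 1 ≤ c)
    (hf : ContDiffOn ℝ 1 f (Set.Icc (N:ℝ) (2*N)))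
    (hder : ∀ x ∈ Set.Icc (N:ℝ) (2*N),
      lam ≤ |derivWithin f (Set.Icc (N:ℝ) (2*N)) x| ∧
      |derivWithin f (Set.Icc (N:ℝ) (2*N)) x| ≤ c * lam) :
    (({n : ℤ | (N:ℤ) ≤ n ∧ n ≤ 2*N ∧ |f n - round (f n)| < δ}.ncard : ℝ)) ≤
      2 * c * N * lam + 4 * c * N * δ + 2 * δ / lam + 1 :=
  stmt_1_general N δ hδ0 hδ1 f lam c hlam hc hf hder
end

section
/- Let N ≥ 4 be an integer, 0 < δ < 1/4, f : [N, 2N] → ℝ any function, and A a real number with 1 ≤ A ≤ N. For each integer a with 1 ≤ a ≤ A, let R(Δ_a f, N, 2δ) denote the number of integers n with N ≤ n ≤ 2N − a and ‖f(n+a) − f(n)‖ < 2δ. Then R(f,N,δ) ≤ N/A + Σ_{1 ≤ a ≤ A} R(Δ_a f, N, 2δ) + 1. -/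
/-!
Split the δ-good points `n` into those having another δ-good point `n + a` with `1 ≤ a ≤ A` and
the rest. A point of the first kind is `2δ`-good for `Δ_a f`, because `x ↦ ‖x‖` is subadditive.
Points of the second kind are more than `A` apart, so at most `N / A + 1` of them fit in `[N, 2N]`.
-/

open Finset

lemma abs_sub_sub_round_sub_le {α : Type*} [Field α] [LinearOrder α] [IsStrictOrderedRing α]
    [FloorRing α] (x y : α) :
    |(x - y) - round (x - y)| ≤ |x - round x| + |y - round y| :=
  calc |(x - y) - round (x - y)| ≤ |(x - y) - ((round x - round y : ℤ) : α)| := round_le _ _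
    _ = |(x - round x) - (y - round y)| := by push_cast; ring_nf
    _ ≤ |x - round x| + |y - round y| := abs_sub _ _

lemma card_le_div_add_one_of_separated {T : Finset ℤ} {lo : ℤ} {L g : ℕ} (hg : 0 < g)
    (hT : T ⊆ Icc lo (lo + L)) (hsep : ∀ n ∈ T, ∀ m ∈ T, n < m → (g : ℤ) ≤ m - n) :
    #T ≤ L / g + 1 := by
  let block : ℤ → ℕ := fun n => (n - lo).toNat / g
  have hmono : StrictMonoOn block T := by
    intro n hn m hm hnm
    have hn' := mem_Icc.1 (hT hn)
    have hgap : (n - lo).toNat + g ≤ (m - lo).toNat := by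
      have := hsep n hn m hm hnm
      omega
    calc block n < (n - lo).toNat / g + 1 := Nat.lt_succ_self _
      _ = ((n - lo).toNat + g) / g := (Nat.add_div_right _ hg).symm
      _ ≤ block m := Nat.div_le_div_right hgap
  have hmaps : Set.MapsTo block T (range (L / g + 1)) := by
    intro n hn
    have hn' := mem_Icc.1 (hT hn)
    rw [coe_range, Set.mem_Iio, Nat.lt_succ_iff]
    exact Nat.div_le_div_right (by omega)
  simpa using card_le_card_of_injOn block hmaps hmono.injOn

/-- `nearIntSet F lo hi δ` is the paper's `S(F, ·, δ)` on the integer window `[lo, hi]`. -/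
noncomputable def nearIntSet (F : ℤ → ℝ) (lo hi : ℤ) (δ : ℝ) : Finset ℤ :=
  {n ∈ Icc lo hi | |F n - round (F n)| < δ}

lemma mem_nearIntSet_fwdDiff {F : ℤ → ℝ} {lo hi n a : ℤ} {δ : ℝ} (hn : n ∈ nearIntSet F lo hi δ)
    (hna : n + a ∈ nearIntSet F lo hi δ) :
    n ∈ nearIntSet (fwdDiff a F) lo (hi - a) (2 * δ) := by
  simp only [nearIntSet, mem_filter, mem_Icc] at hn hna ⊢
  refine ⟨⟨hn.1.1, by omega⟩, ?_⟩
  calc |fwdDiff a F n - round (fwdDiff a F n)|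
      ≤ |F (n + a) - round (F (n + a))| + |F n - round (F n)| := abs_sub_sub_round_sub_le _ _
    _ < 2 * δ := by linarith [hn.2, hna.2]

theorem card_nearIntSet_le (F : ℤ → ℝ) (lo : ℤ) (L k : ℕ) (δ : ℝ) :
    (#(nearIntSet F lo (lo + L) δ) : ℝ) ≤ L / (k + 1 : ℕ)
      + ∑ a ∈ Icc (1 : ℤ) k, (#(nearIntSet (fwdDiff a F) lo (lo + L - a) (2 * δ)) : ℝ) + 1 := by
  classical
  set S := nearIntSet F lo (lo + L) δ
  let isolated : ℤ → Prop := fun n => ∀ a ∈ Icc (1 : ℤ) k, n + a ∉ S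
  have hisolated : #(S.filter isolated) ≤ L / (k + 1) + 1 := by
    refine card_le_div_add_one_of_separated (Nat.succ_pos k) ((filter_subset _ _).trans
      (filter_subset _ _)) fun n hn m hm hnm => ?_
    by_contra! hclose
    refine (mem_filter.1 hn).2 (m - n) (mem_Icc.2 ⟨by omega, by push_cast at hclose; omega⟩) ?_
    simpa using (mem_filter.1 hm).1
  have hpaired : S.filter (¬ isolated ·) ⊆
      (Icc (1 : ℤ) k).biUnion fun a => nearIntSet (fwdDiff a F) lo (lo + L - a) (2 * δ) := by
    intro n hn
    obtain ⟨hnS, hnot⟩ := mem_filter.1 hn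
    obtain ⟨a, ha, hna⟩ : ∃ a ∈ Icc (1 : ℤ) k, n + a ∈ S := by
      simpa only [isolated, not_forall, not_not, exists_prop] using hnot
    exact mem_biUnion.2 ⟨a, ha, mem_nearIntSet_fwdDiff hnS hna⟩
  have hcard := (card_le_card hpaired).trans card_biUnion_le
  rw [← card_filter_add_card_filter_not isolated, Nat.cast_add]
  have hdiv : ((L / (k + 1) : ℕ) : ℝ) ≤ L / (k + 1 : ℕ) := Nat.cast_div_le
  have hiso : (#(S.filter isolated) : ℝ) ≤ (L / (k + 1) : ℕ) + 1 := by exact_mod_cast hisolated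
  have hpair : (#(S.filter (¬ isolated ·)) : ℝ) ≤
      ∑ a ∈ Icc (1 : ℤ) k, (#(nearIntSet (fwdDiff a F) lo (lo + L - a) (2 * δ)) : ℝ) := by
    exact_mod_cast hcard
  linarith

theorem stmt_2_general (N : ℕ)
    (δ : ℝ)
    (f : ℝ → ℝ) (A : ℝ) (hA1 : 1 ≤ A) :
    (({n : ℤ | (N:ℤ) ≤ n ∧ n ≤ 2*N ∧ |f n - round (f n)| < δ}.ncard : ℝ)) ≤
      (N:ℝ) / A
      + ∑ a ∈ Finset.Icc (1:ℤ) ⌊A⌋,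
          (({n : ℤ | (N:ℤ) ≤ n ∧ n ≤ 2*N - a ∧
              |(f ((n + a : ℤ) : ℝ) - f n) - round (f ((n + a : ℤ) : ℝ) - f n)| < 2*δ}.ncard : ℝ))
      + 1 := by
  set F : ℤ → ℝ := fun n => f n
  have htwo : (2 * N : ℤ) = N + N := two_mul _
  have hS : {n : ℤ | (N:ℤ) ≤ n ∧ n ≤ 2*N ∧ |f n - round (f n)| < δ} =
      nearIntSet F N (N + N) δ := by
    ext n; simp [nearIntSet, F, htwo, and_assoc]
  have hR : ∀ a : ℤ, {n : ℤ | (N:ℤ) ≤ n ∧ n ≤ 2*N - a ∧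
      |(f ((n + a : ℤ) : ℝ) - f n) - round (f ((n + a : ℤ) : ℝ) - f n)| < 2*δ} =
      nearIntSet (fwdDiff a F) N (N + N - a) (2 * δ) := by
    intro a; ext n; simp [nearIntSet, F, fwdDiff, htwo, and_assoc]
  simp only [hS, hR, Set.ncard_coe_finset]
  rw [← Int.natCast_floor_eq_floor (by linarith)]
  have hblock : (N : ℝ) / (⌊A⌋₊ + 1 : ℕ) ≤ N / A := by
    push_cast
    exact div_le_div_of_nonneg_left N.cast_nonneg (by linarith) (Nat.lt_floor_add_one A).le
  linarith [card_nearIntSet_le F N N ⌊A⌋₊ δ]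

theorem stmt_2 (N : ℕ) (hN : 4 ≤ N)
    (δ : ℝ) (hδ0 : 0 < δ) (hδ1 : δ < 1/4)
    (f : ℝ → ℝ) (A : ℝ) (hA1 : 1 ≤ A) (hAN : A ≤ N) :
    (({n : ℤ | (N:ℤ) ≤ n ∧ n ≤ 2*N ∧ |f n - round (f n)| < δ}.ncard : ℝ)) ≤
      (N:ℝ) / A
      + ∑ a ∈ Finset.Icc (1:ℤ) ⌊A⌋,
          (({n : ℤ | (N:ℤ) ≤ n ∧ n ≤ 2*N - a ∧
              |(f ((n + a : ℤ) : ℝ) - f n) - round (f ((n + a : ℤ) : ℝ) - f n)| < 2*δ}.ncard : ℝ))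
      + 1 :=
  stmt_2_general N δ f A hA1
end

section
/- Let m, n be positive integers and let A_i, a_i (for 1 ≤ i ≤ m) and B_j, b_j (for 1 ≤ j ≤ n) be positive real numbers. Define E(H) = Σ_{i=1}^{m} A_i·H^{a_i} + Σ_{j=1}^{n} B_j·H^{−b_j} for H > 0. Suppose 0 < H₁ ≤ H₂. Then there exists H with H₁ ≤ H ≤ H₂ such that E(H) ≤ (m+n)·{Σ_{i=1}^{m} Σ_{j=1}^{n} (A_i^{b_j}·B_j^{a_i})^{1/(a_i+b_j)} + Σ_{i=1}^{m} A_i·H₁^{a_i} + Σ_{j=1}^{n} B_j·H₂^{−b_j}}. -/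
open Real Finset

lemma bal1 (A B a b : ℝ) (hA : 0 < A) (hB : 0 < B) (ha : 0 < a) (hb : 0 < b) :
    A * ((B / A) ^ ((1:ℝ)/(a+b))) ^ a = (A ^ b * B ^ a) ^ ((1:ℝ)/(a+b)) := by
  have hab : 0 < a + b := by linarith
  have h1 : (0:ℝ) < (B / A) ^ ((1:ℝ)/(a+b)) := rpow_pos_of_pos (by positivity) _
  have hL : (0:ℝ) < A * ((B / A) ^ ((1:ℝ)/(a+b))) ^ a :=
    mul_pos hA (rpow_pos_of_pos h1 _)
  have hR : (0:ℝ) < (A ^ b * B ^ a) ^ ((1:ℝ)/(a+b)) :=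
    rpow_pos_of_pos (mul_pos (rpow_pos_of_pos hA _) (rpow_pos_of_pos hB _)) _
  rw [← Real.exp_log hL, ← Real.exp_log hR]
  congr 1
  rw [Real.log_mul hA.ne' (by positivity), Real.log_rpow h1, Real.log_rpow (by positivity),
    Real.log_div hB.ne' hA.ne', Real.log_rpow (by positivity),
    Real.log_mul (by positivity) (by positivity), Real.log_rpow hA, Real.log_rpow hB]
  field_simp
  ring

lemma bal2 (A B a b : ℝ) (hA : 0 < A) (hB : 0 < B) (ha : 0 < a) (hb : 0 < b) :
    B * ((B / A) ^ ((1:ℝ)/(a+b))) ^ (-b) = (A ^ b * B ^ a) ^ ((1:ℝ)/(a+b)) := by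
  have hab : 0 < a + b := by linarith
  have h1 : (0:ℝ) < (B / A) ^ ((1:ℝ)/(a+b)) := rpow_pos_of_pos (by positivity) _
  have hL : (0:ℝ) < B * ((B / A) ^ ((1:ℝ)/(a+b))) ^ (-b) :=
    mul_pos hB (rpow_pos_of_pos h1 _)
  have hR : (0:ℝ) < (A ^ b * B ^ a) ^ ((1:ℝ)/(a+b)) :=
    rpow_pos_of_pos (mul_pos (rpow_pos_of_pos hA _) (rpow_pos_of_pos hB _)) _
  rw [← Real.exp_log hL, ← Real.exp_log hR]
  congr 1
  rw [Real.log_mul hB.ne' (by positivity), Real.log_rpow h1, Real.log_rpow (by positivity),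
    Real.log_div hB.ne' hA.ne', Real.log_rpow (by positivity),
    Real.log_mul (by positivity) (by positivity), Real.log_rpow hA, Real.log_rpow hB]
  field_simp
  ring

theorem stmt_4 (m n : ℕ) (hm : 0 < m) (hn : 0 < n)
    (A a : Fin m → ℝ) (B b : Fin n → ℝ)
    (hA : ∀ i, 0 < A i) (ha : ∀ i, 0 < a i)
    (hB : ∀ j, 0 < B j) (hb : ∀ j, 0 < b j)
    (H₁ H₂ : ℝ) (hH1 : 0 < H₁) (hH12 : H₁ ≤ H₂) :
    ∃ H, H₁ ≤ H ∧ H ≤ H₂ ∧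
      (∑ i, A i * H ^ (a i)) + (∑ j, B j * H ^ (-(b j))) ≤
        ((m:ℝ) + (n:ℝ)) *
          ((∑ i, ∑ j, (A i ^ (b j) * B j ^ (a i)) ^ ((1:ℝ)/(a i + b j)))
            + (∑ i, A i * H₁ ^ (a i)) + (∑ j, B j * H₂ ^ (-(b j)))) := by
  haveI : Nonempty (Fin m) := ⟨⟨0, hm⟩⟩
  haveI : Nonempty (Fin n) := ⟨⟨0, hn⟩⟩
  set C : Fin m → Fin n → ℝ :=
    fun i j => (A i ^ (b j) * B j ^ (a i)) ^ ((1:ℝ)/(a i + b j)) with hCdef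
  have hCpos : ∀ i j, 0 < C i j := fun i j =>
    rpow_pos_of_pos (mul_pos (rpow_pos_of_pos (hA i) _) (rpow_pos_of_pos (hB j) _)) _
  set Hij : Fin m → Fin n → ℝ := fun i j => (B j / A i) ^ ((1:ℝ)/(a i + b j)) with hHijdef
  have hHijpos : ∀ i j, 0 < Hij i j := fun i j => rpow_pos_of_pos (div_pos (hB j) (hA i)) _
  have hbal1 : ∀ i j, A i * (Hij i j) ^ (a i) = C i j := fun i j =>
    bal1 (A i) (B j) (a i) (b j) (hA i) (hB j) (ha i) (hb j)
  have hbal2 : ∀ i j, B j * (Hij i j) ^ (-(b j)) = C i j := fun i j =>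
    bal2 (A i) (B j) (a i) (b j) (hA i) (hB j) (ha i) (hb j)
  set D : Fin m → ℝ := fun i => (∑ j, C i j) + A i * H₁ ^ (a i) with hDdef
  have hsumC : ∀ i, 0 < ∑ j, C i j := fun i =>
    Finset.sum_pos (fun j _ => hCpos i j) Finset.univ_nonempty
  have hDpos : ∀ i, 0 < D i := fun i => by
    have h1 := hsumC i
    have h2 : 0 < A i * H₁ ^ (a i) := mul_pos (hA i) (rpow_pos_of_pos hH1 _)
    positivity
  set h : Fin m → ℝ := fun i => (D i / A i) ^ ((1:ℝ)/(a i)) with hhdef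
  have hhpos : ∀ i, 0 < h i := fun i => rpow_pos_of_pos (div_pos (hDpos i) (hA i)) _
  have hkey : ∀ i, A i * (h i) ^ (a i) = D i := fun i => by
    have h0 : (0:ℝ) ≤ D i / A i := (div_pos (hDpos i) (hA i)).le
    show A i * ((D i / A i) ^ ((1:ℝ)/(a i))) ^ (a i) = D i
    rw [← Real.rpow_mul h0, one_div, inv_mul_cancel₀ (ha i).ne', Real.rpow_one,
      mul_comm, div_mul_cancel₀ _ (hA i).ne']
  have hH1h : ∀ i, H₁ ≤ h i := fun i => by
    have h1 : A i * H₁ ^ (a i) ≤ A i * (h i) ^ (a i) := by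
      rw [hkey i]; have := hsumC i; simp only [hDdef]; linarith
    have h2 : H₁ ^ (a i) ≤ (h i) ^ (a i) := le_of_mul_le_mul_left h1 (hA i)
    exact (Real.rpow_le_rpow_iff hH1.le (hhpos i).le (ha i)).mp h2
  set Hmin : ℝ := Finset.univ.inf' Finset.univ_nonempty h with hHmindef
  set H : ℝ := min H₂ Hmin with hHdef
  have hHleH2 : H ≤ H₂ := min_le_left _ _
  have hH1leH : H₁ ≤ H := le_min hH12 (Finset.le_inf' _ _ fun i _ => hH1h i)
  have hHpos : 0 < H := lt_of_lt_of_le hH1 hH1leH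
  refine ⟨H, hH1leH, hHleH2, ?_⟩
  set S : ℝ := (∑ i, ∑ j, C i j) + (∑ i, A i * H₁ ^ (a i)) + (∑ j, B j * H₂ ^ (-(b j)))
    with hSdef
  have hDleS : ∀ i, D i ≤ S := fun i => by
    have h1 : ∑ j, C i j ≤ ∑ i, ∑ j, C i j :=
      Finset.single_le_sum (fun i _ => (hsumC i).le) (Finset.mem_univ i)
    have h2 : A i * H₁ ^ (a i) ≤ ∑ i, A i * H₁ ^ (a i) :=
      Finset.single_le_sum
        (fun i _ => (mul_pos (hA i) (rpow_pos_of_pos hH1 _)).le) (Finset.mem_univ i)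
    have h3 : 0 ≤ ∑ j, B j * H₂ ^ (-(b j)) :=
      Finset.sum_nonneg fun j _ =>
        (mul_pos (hB j) (rpow_pos_of_pos (lt_of_lt_of_le hH1 hH12) _)).le
    simp only [hDdef, hSdef]; linarith
  have hSi : ∀ i, A i * H ^ (a i) ≤ S := fun i => by
    have hHh : H ≤ h i :=
      le_trans (min_le_right _ _) (Finset.inf'_le _ (Finset.mem_univ i))
    have h1 : H ^ (a i) ≤ (h i) ^ (a i) := Real.rpow_le_rpow hHpos.le hHh (ha i).le
    calc A i * H ^ (a i) ≤ A i * (h i) ^ (a i) := by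
          exact mul_le_mul_of_nonneg_left h1 (hA i).le
      _ = D i := hkey i
      _ ≤ S := hDleS i
  have hCleS : ∀ i j, C i j ≤ S := fun i j => by
    have h1 : C i j ≤ ∑ j, C i j :=
      Finset.single_le_sum (fun j _ => (hCpos i j).le) (Finset.mem_univ j)
    have h2 : 0 ≤ ∑ i, A i * H₁ ^ (a i) :=
      Finset.sum_nonneg fun i _ => (mul_pos (hA i) (rpow_pos_of_pos hH1 _)).le
    have h3 : 0 ≤ ∑ j, B j * H₂ ^ (-(b j)) :=
      Finset.sum_nonneg fun j _ =>
        (mul_pos (hB j) (rpow_pos_of_pos (lt_of_lt_of_le hH1 hH12) _)).le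
    have h4 : ∑ j, C i j ≤ ∑ i, ∑ j, C i j :=
      Finset.single_le_sum (fun i _ => (hsumC i).le) (Finset.mem_univ i)
    simp only [hSdef]; linarith
  have hSj : ∀ j, B j * H ^ (-(b j)) ≤ S := fun j => by
    obtain ⟨i, -, hi⟩ := Finset.exists_mem_eq_inf' (Finset.univ_nonempty (α := Fin m)) h
    rcases le_total H₂ (h i) with hc | hc
    · have hHeq : H = H₂ := by
        rw [hHdef, hHmindef, hi]; exact min_eq_left hc
      rw [hHeq]
      have h1 : B j * H₂ ^ (-(b j)) ≤ ∑ j, B j * H₂ ^ (-(b j)) :=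
        Finset.single_le_sum (f := fun k => B k * H₂ ^ (-(b k)))
          (fun j _ => (mul_pos (hB j) (rpow_pos_of_pos (lt_of_lt_of_le hH1 hH12) _)).le)
          (Finset.mem_univ j)
      have h2 : 0 ≤ ∑ i, ∑ j, C i j :=
        Finset.sum_nonneg fun i _ => (hsumC i).le
      have h3 : 0 ≤ ∑ i, A i * H₁ ^ (a i) :=
        Finset.sum_nonneg fun i _ => (mul_pos (hA i) (rpow_pos_of_pos hH1 _)).le
      simp only [hSdef]; linarith
    · have hHeq : H = h i := by
        rw [hHdef, hHmindef, hi]; exact min_eq_right hc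
      have hCD : C i j ≤ D i := by
        have := Finset.single_le_sum (fun j _ => (hCpos i j).le) (Finset.mem_univ j)
        have h2 : 0 < A i * H₁ ^ (a i) := mul_pos (hA i) (rpow_pos_of_pos hH1 _)
        simp only [hDdef]; linarith
      have h1 : A i * (Hij i j) ^ (a i) ≤ A i * (h i) ^ (a i) := by
        rw [hbal1 i j, hkey i]; exact hCD
      have h2 : (Hij i j) ^ (a i) ≤ (h i) ^ (a i) := le_of_mul_le_mul_left h1 (hA i)
      have h3 : Hij i j ≤ h i :=
        (Real.rpow_le_rpow_iff (hHijpos i j).le (hhpos i).le (ha i)).mp h2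
      have h4 : (h i) ^ (-(b j)) ≤ (Hij i j) ^ (-(b j)) :=
        Real.rpow_le_rpow_of_nonpos (hHijpos i j) h3 (neg_nonpos.mpr (hb j).le)
      calc B j * H ^ (-(b j)) = B j * (h i) ^ (-(b j)) := by rw [hHeq]
        _ ≤ B j * (Hij i j) ^ (-(b j)) := mul_le_mul_of_nonneg_left h4 (hB j).le
        _ = C i j := hbal2 i j
        _ ≤ S := hCleS i j
  calc (∑ i, A i * H ^ (a i)) + (∑ j, B j * H ^ (-(b j)))
      ≤ (∑ _i : Fin m, S) + (∑ _j : Fin n, S) :=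
        add_le_add (Finset.sum_le_sum fun i _ => hSi i)
          (Finset.sum_le_sum fun j _ => hSj j)
    _ = ((m:ℝ) + (n:ℝ)) * S := by
        simp [Finset.sum_const, Finset.card_univ, nsmul_eq_mul]; ring
    _ = ((m:ℝ) + (n:ℝ)) *
          ((∑ i, ∑ j, (A i ^ (b j) * B j ^ (a i)) ^ ((1:ℝ)/(a i + b j)))
            + (∑ i, A i * H₁ ^ (a i)) + (∑ j, B j * H₂ ^ (-(b j)))) := rfl
end

section
/- Let k be a positive integer, let x₀ < x₁ < ⋯ < x_k be real numbers, and let f be of class C^k on [x₀, x_k]. Let P(x) = b_k·x^k + ⋯ + b₀ be the unique polynomial of degree ≤ k such that P(x_i) = f(x_i) for i = 0, …, k. Then there exists a real number t ∈ [x₀, x_k] such that b_k = f^{(k)}(t)/k!. -/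
/-! The difference `g = f - P` vanishes at the `k + 1` nodes, so `k` successive applications of
Rolle's theorem produce a point `t` with `g⁽ᵏ⁾ t = 0`. Since `deg P ≤ k`, the `k`-th derivative
of `P` is the constant `k! * b_k`, hence `f⁽ᵏ⁾ t = k! * b_k`. -/

open Set Polynomial

open scoped Nat

namespace Polynomial

theorem iterate_derivative_eq_C_factorial_mul_coeff {R : Type*} [CommSemiring R] {p : R[X]}
    {n : ℕ} (hp : p.natDegree ≤ n) : derivative^[n] p = C (n ! * p.coeff n) := by
  have hdeg : (derivative^[n] p).natDegree = 0 :=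
    Nat.le_zero.mp ((p.natDegree_iterate_derivative n).trans (by omega))
  rw [eq_C_of_natDegree_eq_zero hdeg, coeff_iterate_derivative, zero_add,
    Nat.descFactorial_self, nsmul_eq_mul]

theorem iteratedDerivWithin_eval {𝕜 : Type*} [NontriviallyNormedField 𝕜] (p : 𝕜[X]) (n : ℕ)
    {s : Set 𝕜} (hs : UniqueDiffOn 𝕜 s) {t : 𝕜} (ht : t ∈ s) :
    iteratedDerivWithin n (fun y => p.eval y) s t = (derivative^[n] p).eval t := by
  induction n generalizing p with
  | zero => simp
  | succ n ih =>
    have hderiv : EqOn (derivWithin (fun y => p.eval y) s) (fun y => p.derivative.eval y) s :=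
      fun y hy => p.derivWithin (hs.uniqueDiffWithinAt hy)
    rw [iteratedDerivWithin_succ', iteratedDerivWithin_congr hderiv ht, ih,
      Function.iterate_succ_apply]

end Polynomial

theorem exists_strictMono_deriv_eq_zero {n : ℕ} {a b : ℝ} {g : ℝ → ℝ}
    (hg : ContinuousOn g (Icc a b)) {y : Fin (n + 2) → ℝ} (hy : StrictMono y)
    (hmem : ∀ i, y i ∈ Icc a b) (hzero : ∀ i, g (y i) = 0) :
    ∃ z : Fin (n + 1) → ℝ, StrictMono z ∧ (∀ i, z i ∈ Ioo a b) ∧ ∀ i, deriv g (z i) = 0 := by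
  have hrolle : ∀ i : Fin (n + 1), ∃ z ∈ Ioo (y i.castSucc) (y i.succ), deriv g z = 0 :=
    fun i => exists_deriv_eq_zero (hy i.castSucc_lt_succ)
      (hg.mono (Icc_subset_Icc (hmem i.castSucc).1 (hmem i.succ).2))
      (by rw [hzero, hzero])
  choose z hz hz0 using hrolle
  refine ⟨z, fun i j hij => ?_, fun i => ?_, hz0⟩
  · calc z i < y i.succ := (hz i).2
      _ ≤ y j.castSucc := hy.monotone (Fin.le_def.mpr (by simpa using hij))
      _ < z j := (hz j).1
  · exact ⟨(hmem i.castSucc).1.trans_lt (hz i).1, (hz i).2.trans_le (hmem i.succ).2⟩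

theorem exists_iteratedDerivWithin_eq_zero {n : ℕ} {a b : ℝ} {g : ℝ → ℝ}
    (hg : ContDiffOn ℝ n g (Icc a b)) {y : Fin (n + 1) → ℝ} (hy : StrictMono y)
    (hmem : ∀ i, y i ∈ Icc a b) (hzero : ∀ i, g (y i) = 0) :
    ∃ t ∈ Icc a b, iteratedDerivWithin n g (Icc a b) t = 0 := by
  induction n generalizing g with
  | zero => exact ⟨y 0, hmem 0, by simpa using hzero 0⟩
  | succ n ih =>
    have hab : a < b := ((hmem 0).1.trans_lt (hy (Fin.lt_def.mpr (by simp)))).trans_le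
      (hmem (Fin.last _)).2
    obtain ⟨z, hz, hzmem, hz0⟩ :=
      exists_strictMono_deriv_eq_zero hg.continuousOn hy hmem hzero
    have hg' : ContDiffOn ℝ n (derivWithin g (Icc a b)) (Icc a b) :=
      hg.derivWithin (uniqueDiffOn_Icc hab) (by exact_mod_cast le_rfl)
    have hz0' : ∀ i, derivWithin g (Icc a b) (z i) = 0 := fun i => by
      rw [derivWithin_of_mem_nhds (Icc_mem_nhds (hzmem i).1 (hzmem i).2), hz0]
    obtain ⟨t, ht, h0⟩ := ih hg' hz (fun i => Ioo_subset_Icc_self (hzmem i)) hz0'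
    exact ⟨t, ht, by rwa [iteratedDerivWithin_succ']⟩

theorem stmt_5 (k : ℕ) (hk : 0 < k) (x : Fin (k+1) → ℝ) (hx : StrictMono x)
    (f : ℝ → ℝ)
    (hf : ContDiffOn ℝ k f (Set.Icc (x 0) (x (Fin.last k))))
    (P : Polynomial ℝ) (hdeg : P.natDegree ≤ k)
    (hP : ∀ i, P.eval (x i) = f (x i)) :
    ∃ t ∈ Set.Icc (x 0) (x (Fin.last k)),
      P.coeff k =
        iteratedDerivWithin k f (Set.Icc (x 0) (x (Fin.last k))) t / (k.factorial : ℝ) := by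
  set s := Icc (x 0) (x (Fin.last k))
  have hs : UniqueDiffOn ℝ s := uniqueDiffOn_Icc (hx (Fin.lt_def.mpr hk))
  have hPs : ContDiffOn ℝ k (fun y => P.eval y) s := by
    simpa using (P.contDiff_aeval (𝕜 := ℝ) k).contDiffOn
  have hmem : ∀ i, x i ∈ s := fun i => ⟨hx.monotone (Fin.zero_le i), hx.monotone (Fin.le_last i)⟩
  obtain ⟨t, ht, h0⟩ := exists_iteratedDerivWithin_eq_zero (g := f - fun y => P.eval y)
    (hf.sub hPs) hx hmem fun i => sub_eq_zero.mpr (hP i).symm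
  rw [iteratedDerivWithin_sub ht hs (hf.contDiffWithinAt ht) (hPs.contDiffWithinAt ht),
    iteratedDerivWithin_eval P k hs ht, iterate_derivative_eq_C_factorial_mul_coeff hdeg,
    eval_C, sub_eq_zero] at h0
  exact ⟨t, ht, by rw [h0, mul_div_cancel_left₀ _ (by positivity)]⟩
end

section
/- Let S be a nonempty finite set of integers with max S − min S ≤ N for a real N > 0. Suppose S is covered by finitely many pairwise disjoint intervals I₁, …, I_J, each of positive length L(I_j) and each satisfying S ∩ I_j ≠ ∅. Then |S| ≤ N·max_j (|S ∩ I_j| / L(I_j)) + 2·max_j |S ∩ I_j|. -/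
/-!
Let `T_j = S ∩ I_j` and `[m, M]` the hull of `S`. The intervals lying inside `[m, M]` are
disjoint, so their lengths add up to at most `M - m ≤ N`, and each carries at most
`ρ · L(I_j)` points, `ρ = max_j |T_j| / L(I_j)`. Any other interval meeting `S` sticks out of
`[m, M]` while containing a point of it, hence contains `m` or `M`; by disjointness there are at
most two of them, each carrying at most `max_j |T_j|` points.
-/

open Set Finset Function MeasureTheory

lemma card_filter_mem_le_one {ι α : Type*} {s : ι → Set α} (hs : Pairwise (Disjoint on s))
    (t : Finset ι) (x : α) [DecidablePred (x ∈ s ·)] : #{j ∈ t | x ∈ s j} ≤ 1 := by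
  refine Finset.card_le_one.mpr fun i hi j hj => ?_
  by_contra hij
  exact (hs hij).ne_of_mem (Finset.mem_filter.mp hi).2 (Finset.mem_filter.mp hj).2 rfl

lemma left_mem_Icc_or_right_mem_Icc_of_not_Icc_subset {α : Type*} [LinearOrder α]
    {a b c d x : α} (hx : x ∈ Icc a b) (hx' : x ∈ Icc c d) (h : ¬Icc c d ⊆ Icc a b) :
    a ∈ Icc c d ∨ b ∈ Icc c d := by
  rw [Set.Icc_subset_Icc_iff (hx'.1.trans hx'.2), not_and_or, not_le, not_le] at h
  rcases h with h | h
  · exact Or.inl ⟨h.le, hx.1.trans hx'.2⟩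
  · exact Or.inr ⟨hx'.1.trans hx.2, h.le⟩

lemma sum_sub_le_sub_of_pairwiseDisjoint_Icc {ι : Type*} {s : Finset ι} {a b : ℝ}
    {c d : ι → ℝ} (hcd : ∀ j ∈ s, c j ≤ d j) (hsub : ∀ j ∈ s, Icc (c j) (d j) ⊆ Icc a b)
    (hdisj : (s : Set ι).PairwiseDisjoint fun j => Icc (c j) (d j)) (hab : a ≤ b) :
    ∑ j ∈ s, (d j - c j) ≤ b - a := by
  have hvol : ∑ j ∈ s, volume (Icc (c j) (d j)) ≤ volume (Icc a b) := by
    rw [← measure_biUnion_finset hdisj fun _ _ => measurableSet_Icc]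
    exact measure_mono (Set.iUnion₂_subset hsub)
  simp only [Real.volume_Icc] at hvol
  rw [← ENNReal.ofReal_sum_of_nonneg fun j hj => sub_nonneg.mpr (hcd j hj)] at hvol
  exact (ENNReal.ofReal_le_ofReal_iff (sub_nonneg.mpr hab)).mp hvol

lemma card_le_mul_add_two_mul_of_Icc_cover {α ι : Type*} [Fintype ι] [DecidableEq α]
    (f : α → ℝ) (S : Finset α) {a b : ℝ} (hab : a ≤ b) (hS : ∀ n ∈ S, f n ∈ Icc a b)
    {c d : ι → ℝ} (hcd : ∀ j, c j ≤ d j) (hdisj : Pairwise (Disjoint on fun j => Icc (c j) (d j)))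
    (hcover : ∀ n ∈ S, ∃ j, f n ∈ Icc (c j) (d j)) {r K : ℝ} (hr : 0 ≤ r) (hK : 0 ≤ K)
    (hdens : ∀ j, (#{n ∈ S | f n ∈ Icc (c j) (d j)} : ℝ) ≤ r * (d j - c j))
    (hmax : ∀ j, (#{n ∈ S | f n ∈ Icc (c j) (d j)} : ℝ) ≤ K) :
    (#S : ℝ) ≤ r * (b - a) + 2 * K := by
  classical
  set T : ι → Finset α := fun j => {n ∈ S | f n ∈ Icc (c j) (d j)}
  set inner : Finset ι := {j | Icc (c j) (d j) ⊆ Icc a b}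
  set boundary : Finset ι :=
    ({j | a ∈ Icc (c j) (d j)} : Finset ι) ∪ ({j | b ∈ Icc (c j) (d j)} : Finset ι)
  have hcard_le_sum : #S ≤ ∑ j, #(T j) := by
    refine (Finset.card_le_card fun n hn => ?_).trans Finset.card_biUnion_le
    obtain ⟨j, hj⟩ := hcover n hn
    exact Finset.mem_biUnion.mpr ⟨j, Finset.mem_univ _, Finset.mem_filter.mpr ⟨hn, hj⟩⟩
  have hinner : ∑ j ∈ inner, (#(T j) : ℝ) ≤ r * (b - a) := by
    have hlen : ∑ j ∈ inner, (d j - c j) ≤ b - a :=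
      sum_sub_le_sub_of_pairwiseDisjoint_Icc (fun j _ => hcd j)
        (fun j hj => (Finset.mem_filter.mp hj).2) (hdisj.set_pairwise _) hab
    calc ∑ j ∈ inner, (#(T j) : ℝ) ≤ ∑ j ∈ inner, r * (d j - c j) :=
          Finset.sum_le_sum fun j _ => hdens j
      _ = r * ∑ j ∈ inner, (d j - c j) := (Finset.mul_sum _ _ _).symm
      _ ≤ r * (b - a) := mul_le_mul_of_nonneg_left hlen hr
  have hboundary_card : #boundary ≤ 2 :=
    (Finset.card_union_le _ _).trans
      (add_le_add (card_filter_mem_le_one hdisj _ a) (card_filter_mem_le_one hdisj _ b))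
  have houter_le : ∑ j ∈ innerᶜ, #(T j) ≤ ∑ j ∈ boundary, #(T j) := by
    refine Finset.sum_le_sum_of_ne_zero fun j hj hTj => ?_
    obtain ⟨n, hn⟩ := Finset.card_pos.mp (Nat.pos_of_ne_zero hTj)
    obtain ⟨hnS, hnI⟩ := Finset.mem_filter.mp hn
    have hout : ¬Icc (c j) (d j) ⊆ Icc a b := by simpa [inner] using hj
    rcases left_mem_Icc_or_right_mem_Icc_of_not_Icc_subset (hS n hnS) hnI hout with h | h
    · exact Finset.mem_union_left _ (Finset.mem_filter.mpr ⟨Finset.mem_univ _, h⟩)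
    · exact Finset.mem_union_right _ (Finset.mem_filter.mpr ⟨Finset.mem_univ _, h⟩)
  have houter : ∑ j ∈ innerᶜ, (#(T j) : ℝ) ≤ 2 * K :=
    calc ∑ j ∈ innerᶜ, (#(T j) : ℝ) ≤ ∑ j ∈ boundary, (#(T j) : ℝ) := by exact_mod_cast houter_le
      _ ≤ #boundary * K := by
          rw [← nsmul_eq_mul]; exact Finset.sum_le_card_nsmul boundary _ K fun j _ => hmax j
      _ ≤ 2 * K := mul_le_mul_of_nonneg_right (by exact_mod_cast hboundary_card) hK
  calc (#S : ℝ) ≤ ∑ j, (#(T j) : ℝ) := by exact_mod_cast hcard_le_sum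
    _ = ∑ j ∈ inner, (#(T j) : ℝ) + ∑ j ∈ innerᶜ, (#(T j) : ℝ) :=
        (Finset.sum_add_sum_compl _ _).symm
    _ ≤ r * (b - a) + 2 * K := add_le_add hinner houter

theorem stmt_7_general (S : Finset ℤ) (hS : S.Nonempty) (N : ℝ)
    (hrange : ((S.max' hS - S.min' hS : ℤ) : ℝ) ≤ N)
    (J : ℕ) (c d : Fin J → ℝ) (hcd : ∀ j, c j < d j)
    (hdisj : ∀ i j, i ≠ j → Disjoint (Set.Icc (c i) (d i)) (Set.Icc (c j) (d j)))
    (hcover : ∀ n ∈ S, ∃ j, (n:ℝ) ∈ Set.Icc (c j) (d j)) :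
    (S.card : ℝ) ≤
      N * (⨆ j : Fin J,
            (({n : ℤ | n ∈ S ∧ (n:ℝ) ∈ Set.Icc (c j) (d j)}.ncard : ℝ) / (d j - c j)))
      + 2 * (⨆ j : Fin J,
            (({n : ℤ | n ∈ S ∧ (n:ℝ) ∈ Set.Icc (c j) (d j)}.ncard : ℝ))) := by
  have hncard : ∀ j, {n : ℤ | n ∈ S ∧ (n : ℝ) ∈ Icc (c j) (d j)}.ncard
      = #{n ∈ S | ((n : ℤ) : ℝ) ∈ Icc (c j) (d j)} := fun j => by
    rw [← Set.ncard_coe_finset, Finset.coe_filter]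
  simp only [hncard]
  have hlen : ∀ j, 0 < d j - c j := fun j => sub_pos.mpr (hcd j)
  have hρ_ge : ∀ j, (#{n ∈ S | ((n : ℤ) : ℝ) ∈ Icc (c j) (d j)} : ℝ) / (d j - c j)
      ≤ ⨆ j, (#{n ∈ S | ((n : ℤ) : ℝ) ∈ Icc (c j) (d j)} : ℝ) / (d j - c j) :=
    le_ciSup (Set.finite_range _).bddAbove
  have hK_ge : ∀ j, (#{n ∈ S | ((n : ℤ) : ℝ) ∈ Icc (c j) (d j)} : ℝ)
      ≤ ⨆ j, (#{n ∈ S | ((n : ℤ) : ℝ) ∈ Icc (c j) (d j)} : ℝ) :=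
    le_ciSup (Set.finite_range _).bddAbove
  set ρ := ⨆ j, (#{n ∈ S | ((n : ℤ) : ℝ) ∈ Icc (c j) (d j)} : ℝ) / (d j - c j)
  set K := ⨆ j, (#{n ∈ S | ((n : ℤ) : ℝ) ∈ Icc (c j) (d j)} : ℝ)
  have hρ : 0 ≤ ρ := Real.iSup_nonneg fun j => div_nonneg (Nat.cast_nonneg _) (hlen j).le
  have hK : 0 ≤ K := Real.iSup_nonneg fun _ => Nat.cast_nonneg _
  have hbounds : ∀ n ∈ S, (n : ℝ) ∈ Icc (S.min' hS : ℝ) (S.max' hS : ℝ) := fun n hn =>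
    ⟨by exact_mod_cast S.min'_le n hn, by exact_mod_cast S.le_max' n hn⟩
  have hhull : (S.max' hS : ℝ) - S.min' hS ≤ N := by exact_mod_cast hrange
  calc (#S : ℝ) ≤ ρ * ((S.max' hS : ℝ) - S.min' hS) + 2 * K :=
        card_le_mul_add_two_mul_of_Icc_cover _ S (by exact_mod_cast S.min'_le_max' hS) hbounds
          (fun j => (hcd j).le) (fun i j => hdisj i j) hcover hρ hK
          (fun j => (div_le_iff₀ (hlen j)).mp (hρ_ge j)) hK_ge
    _ ≤ N * ρ + 2 * K := by linarith [mul_le_mul_of_nonneg_left hhull hρ]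

theorem stmt_7 (S : Finset ℤ) (hS : S.Nonempty) (N : ℝ) (hN : 0 < N)
    (hrange : ((S.max' hS - S.min' hS : ℤ) : ℝ) ≤ N)
    (J : ℕ) (c d : Fin J → ℝ) (hcd : ∀ j, c j < d j)
    (hdisj : ∀ i j, i ≠ j → Disjoint (Set.Icc (c i) (d i)) (Set.Icc (c j) (d j)))
    (hcover : ∀ n ∈ S, ∃ j, (n:ℝ) ∈ Set.Icc (c j) (d j))
    (hne : ∀ j, ∃ n ∈ S, (n:ℝ) ∈ Set.Icc (c j) (d j)) :
    (S.card : ℝ) ≤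
      N * (⨆ j : Fin J,
            (({n : ℤ | n ∈ S ∧ (n:ℝ) ∈ Set.Icc (c j) (d j)}.ncard : ℝ) / (d j - c j)))
      + 2 * (⨆ j : Fin J,
            (({n : ℤ | n ∈ S ∧ (n:ℝ) ∈ Set.Icc (c j) (d j)}.ncard : ℝ))) :=
  stmt_7_general S hS N hrange J c d hcd hdisj hcover
end

section
/- Let I be a real interval of length ≥ 2 and let f be of class C² on I. If |f(x)| ≤ 1 and |f″(x)| ≤ 1 for all x ∈ I, then |f′(x)| ≤ 2 for all x ∈ I. -/
/-!
On a subinterval `[c, c + 2]` containing `x`, the derivative `f'` is 1-Lipschitz, so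
`f (c + 2) - f c = ∫ f'` differs from `2 f'(x)` by at most `∫_c^{c+2} |t - x| dt ≤ 2`.
Since `|f (c + 2) - f c| ≤ 2`, this forces `2 |f'(x)| ≤ 4`.
-/

open Set intervalIntegral

theorem exists_mem_Icc_add_subset_Icc {a b L x : ℝ} (hL : 0 ≤ L) (hLab : L ≤ b - a)
    (hx : x ∈ Icc a b) : ∃ c, x ∈ Icc c (c + L) ∧ Icc c (c + L) ⊆ Icc a b := by
  refine ⟨min x (b - L), ⟨min_le_left _ _, ?_⟩, Icc_subset_Icc ?_ ?_⟩
  · rcases min_cases x (b - L) with ⟨h, _⟩ | ⟨h, _⟩ <;> linarith [hx.2]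
  · exact le_min hx.1 (by linarith)
  · linarith [min_le_right x (b - L)]

theorem integral_abs_sub_of_mem_Icc {u v x : ℝ} (hx : x ∈ Icc u v) :
    ∫ t in u..v, |t - x| = ((x - u) ^ 2 + (v - x) ^ 2) / 2 := by
  have hint : ∀ p q : ℝ, IntervalIntegrable (fun t => |t - x|) MeasureTheory.volume p q :=
    fun p q => (continuous_abs.comp (continuous_sub_right x)).intervalIntegrable p q
  rw [← integral_add_adjacent_intervals (hint u x) (hint x v),
    integral_congr (g := fun t => -(t - x)) fun t ht => abs_of_nonpos (by
      rw [uIcc_of_le hx.1] at ht; linarith [ht.2]),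
    integral_congr (g := fun t => t - x) fun t ht => abs_of_nonneg (by
      rw [uIcc_of_le hx.2] at ht; linarith [ht.1])]
  simp only [integral_neg, integral_comp_sub_right fun t => t, integral_id]
  ring

theorem abs_sub_sub_mul_le_integral_abs_sub {f g : ℝ → ℝ} {u v x : ℝ} (huv : u ≤ v)
    (hf : ContinuousOn f (Icc u v)) (hderiv : ∀ t ∈ Ioo u v, HasDerivAt f (g t) t)
    (hg : ContinuousOn g (Icc u v)) (hlip : ∀ t ∈ Icc u v, |g t - g x| ≤ |t - x|) :
    |f v - f u - g x * (v - u)| ≤ ∫ t in u..v, |t - x| := by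
  have hgint := hg.intervalIntegrable_of_Icc (μ := MeasureTheory.volume) huv
  have hftc : f v - f u - g x * (v - u) = ∫ t in u..v, (g t - g x) := by
    rw [integral_sub hgint intervalIntegrable_const,
      integral_eq_sub_of_hasDerivAt_of_le huv hf hderiv hgint, integral_const, smul_eq_mul,
      mul_comm]
  rw [hftc, ← Real.norm_eq_abs]
  exact norm_integral_le_of_norm_le huv
    (.of_forall fun t ht => hlip t (Ioc_subset_Icc_self ht))
    ((continuous_abs.comp (continuous_sub_right x)).intervalIntegrable u v)

theorem abs_derivWithin_sub_le_of_abs_iteratedDerivWithin_two_le {f : ℝ → ℝ} {s : Set ℝ}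
    {C x t : ℝ} (hs : Convex ℝ s) (hs' : UniqueDiffOn ℝ s) (hf : ContDiffOn ℝ 2 f s)
    (hC : ∀ y ∈ s, |iteratedDerivWithin 2 f s y| ≤ C) (hx : x ∈ s) (ht : t ∈ s) :
    |derivWithin f s t - derivWithin f s x| ≤ C * |t - x| := by
  have h2 : iteratedDerivWithin 2 f s = derivWithin (derivWithin f s) s := by
    rw [iteratedDerivWithin_succ, iteratedDerivWithin_one]
  rw [h2] at hC
  exact hs.norm_image_sub_le_of_norm_derivWithin_le
    ((hf.derivWithin hs' le_rfl).differentiableOn one_ne_zero) hC hx ht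

theorem stmt_8 (a b : ℝ) (hab : 2 ≤ b - a)
    (f : ℝ → ℝ) (hf : ContDiffOn ℝ 2 f (Set.Icc a b))
    (hf0 : ∀ x ∈ Set.Icc a b, |f x| ≤ 1)
    (hf2 : ∀ x ∈ Set.Icc a b, |iteratedDerivWithin 2 f (Set.Icc a b) x| ≤ 1) :
    ∀ x ∈ Set.Icc a b, |derivWithin f (Set.Icc a b) x| ≤ 2 := by
  intro x hx
  set g := derivWithin f (Icc a b)
  have hud : UniqueDiffOn ℝ (Icc a b) := uniqueDiffOn_Icc (by linarith)
  obtain ⟨c, hxc, hsub⟩ := exists_mem_Icc_add_subset_Icc zero_le_two hab hx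
  have hac : a ≤ c := (hsub ⟨le_rfl, by linarith⟩).1
  have hcb : c + 2 ≤ b := (hsub ⟨by linarith, le_rfl⟩).2
  have hderiv : ∀ t ∈ Ioo c (c + 2), HasDerivAt f (g t) t := fun t ht =>
    (hf.differentiableOn two_ne_zero t (hsub (Ioo_subset_Icc_self ht))).hasDerivWithinAt.hasDerivAt
      (Icc_mem_nhds (by linarith [ht.1]) (by linarith [ht.2]))
  have htaylor := abs_sub_sub_mul_le_integral_abs_sub (by linarith) (hf.continuousOn.mono hsub)
    hderiv ((hf.continuousOn_derivWithin hud one_le_two).mono hsub) fun t ht => by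
      simpa using abs_derivWithin_sub_le_of_abs_iteratedDerivWithin_two_le (convex_Icc a b) hud
        hf hf2 hx (hsub ht)
  rw [integral_abs_sub_of_mem_Icc hxc] at htaylor
  have htent : ((x - c) ^ 2 + (c + 2 - x) ^ 2) / 2 ≤ 2 := by
    nlinarith [mul_nonneg (sub_nonneg.2 hxc.1) (sub_nonneg.2 hxc.2)]
  have hc := hf0 c ⟨hac, by linarith⟩
  have hc2 := hf0 (c + 2) ⟨by linarith, hcb⟩
  rw [abs_le] at htaylor hc hc2 ⊢
  constructor <;> linarith
end

section
/- Let a be a real number, L > 0, and let f be of class C² on [a, a+L]. Then sup_{a ≤ x ≤ a+L} |f′(x)| ≤ (2/L)·sup_{a ≤ x ≤ a+L} |f(x)| + (L/2)·sup_{a ≤ x ≤ a+L} |f″(x)|. -/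
/-!
Expand `f` by Taylor's formula from `x` to both endpoints `a` and `b = a + L`. Subtracting
the two expansions gives `L f'(x) = f b - f a - (r_b - r_a)` with remainders
`|r_b| ≤ M₂ (b - x)² / 2` and `|r_a| ≤ M₂ (x - a)² / 2`, where `M₀`, `M₂` bound `|f|`, `|f''|`.
Since `(b - x)² + (x - a)² ≤ L²`, this yields `L |f'(x)| ≤ 2 M₀ + M₂ L² / 2`.
-/

open Set

theorem taylorWithinEval_one (f : ℝ → ℝ) (s : Set ℝ) (x₀ x : ℝ) :
    taylorWithinEval f 1 s x₀ x = f x₀ + derivWithin f s x₀ * (x - x₀) := by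
  simp [taylor_within_apply, mul_comm]

theorem abs_sub_sub_derivWithin_mul_le {f : ℝ → ℝ} {a b C x₀ x : ℝ}
    (hf : ContDiffOn ℝ 2 f (Icc a b)) (hx₀ : x₀ ∈ Icc a b) (hx : x ∈ Icc a b)
    (hC : ∀ y ∈ Icc a b, |iteratedDerivWithin 2 f (Icc a b) y| ≤ C) :
    |f x - f x₀ - derivWithin f (Icc a b) x₀ * (x - x₀)| ≤ C / 2 * (x - x₀) ^ 2 := by
  rcases eq_or_ne x₀ x with rfl | hne
  · simp
  have hsub : uIcc x₀ x ⊆ Icc a b := uIcc_subset_Icc hx₀ hx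
  obtain ⟨y, hy, hrem⟩ :=
    taylor_mean_remainder_lagrange_iteratedDeriv (n := 1) hne (hf.mono hsub)
  have hy' : y ∈ Ioo a b :=
    ⟨(le_min hx₀.1 hx.1).trans_lt hy.1, hy.2.trans_le (max_le hx₀.2 hx.2)⟩
  have hderiv : derivWithin f (uIcc x₀ x) x₀ = derivWithin f (Icc a b) x₀ :=
    derivWithin_subset hsub (uniqueDiffOn_uIcc hne x₀ left_mem_uIcc)
      (hf.differentiableOn (by norm_num) x₀ hx₀)
  have hy2 : iteratedDerivWithin 2 f (Icc a b) y = iteratedDeriv 2 f y :=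
    iteratedDerivWithin_eq_iteratedDeriv (uniqueDiffOn_Icc (hy'.1.trans hy'.2))
      (hf.contDiffAt (Icc_mem_nhds hy'.1 hy'.2)) (Ioo_subset_Icc_self hy')
  rw [taylorWithinEval_one, hderiv, ← hy2] at hrem
  calc |f x - f x₀ - derivWithin f (Icc a b) x₀ * (x - x₀)|
      = |iteratedDerivWithin 2 f (Icc a b) y| / 2 * (x - x₀) ^ 2 := by
        rw [sub_sub, hrem]; simp [abs_mul, abs_div, Nat.factorial]; ring
    _ ≤ C / 2 * (x - x₀) ^ 2 := by gcongr; exact hC y (Ioo_subset_Icc_self hy')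

theorem abs_derivWithin_le_of_abs_le {f : ℝ → ℝ} {a b M₀ M₂ x : ℝ} (hab : a < b)
    (hf : ContDiffOn ℝ 2 f (Icc a b)) (hM₀ : ∀ y ∈ Icc a b, |f y| ≤ M₀)
    (hM₂ : ∀ y ∈ Icc a b, |iteratedDerivWithin 2 f (Icc a b) y| ≤ M₂)
    (hx : x ∈ Icc a b) :
    |derivWithin f (Icc a b) x| ≤ 2 / (b - a) * M₀ + (b - a) / 2 * M₂ := by
  set D := derivWithin f (Icc a b) x
  have ha : a ∈ Icc a b := left_mem_Icc.2 hab.le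
  have hb : b ∈ Icc a b := right_mem_Icc.2 hab.le
  have hM₂nonneg : 0 ≤ M₂ := (abs_nonneg _).trans (hM₂ x hx)
  have hrb := abs_sub_sub_derivWithin_mul_le hf hx hb hM₂
  have hra := abs_sub_sub_derivWithin_mul_le hf hx ha hM₂
  have hsq : (b - x) ^ 2 + (a - x) ^ 2 ≤ (b - a) ^ 2 := by
    nlinarith [mul_nonneg (sub_nonneg.2 hx.2) (sub_nonneg.2 hx.1)]
  have key : |D| * (b - a) ≤ 2 * M₀ + M₂ / 2 * (b - a) ^ 2 := calc
    |D| * (b - a) = |(f b - f a) - ((f b - f x - D * (b - x)) - (f a - f x - D * (a - x)))| := by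
        rw [← abs_of_pos (sub_pos.2 hab), ← abs_mul]; congr 1; ring
    _ ≤ (|f b| + |f a|) + (|f b - f x - D * (b - x)| + |f a - f x - D * (a - x)|) :=
        (abs_sub _ _).trans (add_le_add (abs_sub _ _) (abs_sub _ _))
    _ ≤ (M₀ + M₀) + (M₂ / 2 * (b - x) ^ 2 + M₂ / 2 * (a - x) ^ 2) := by
        gcongr
        exacts [hM₀ b hb, hM₀ a ha]
    _ = 2 * M₀ + M₂ / 2 * ((b - x) ^ 2 + (a - x) ^ 2) := by ring
    _ ≤ 2 * M₀ + M₂ / 2 * (b - a) ^ 2 := by gcongr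
  rw [← le_div_iff₀ (sub_pos.2 hab)] at key
  calc |D| ≤ (2 * M₀ + M₂ / 2 * (b - a) ^ 2) / (b - a) := key
    _ = 2 / (b - a) * M₀ + (b - a) / 2 * M₂ := by field_simp

theorem ContinuousOn.le_iSup_of_isCompact {s : Set ℝ} {g : ℝ → ℝ} {x : ℝ}
    (hg : ContinuousOn g s) (hs : IsCompact s) (hx : x ∈ s) : g x ≤ ⨆ y : s, g y :=
  le_ciSup (f := fun y : s => g y)
    (by simpa only [image_eq_range] using hs.bddAbove_image hg) ⟨x, hx⟩

theorem stmt_9 (a L : ℝ) (hL : 0 < L)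
    (f : ℝ → ℝ) (hf : ContDiffOn ℝ 2 f (Set.Icc a (a + L))) :
    (⨆ x : Set.Icc a (a + L), |derivWithin f (Set.Icc a (a + L)) x|) ≤
      (2 / L) * (⨆ x : Set.Icc a (a + L), |f x|)
      + (L / 2) * (⨆ x : Set.Icc a (a + L), |iteratedDerivWithin 2 f (Set.Icc a (a + L)) x|) := by
  have hab : a < a + L := lt_add_of_pos_right a hL
  have : Nonempty (Icc a (a + L)) := ⟨⟨a, left_mem_Icc.2 hab.le⟩⟩
  refine ciSup_le fun ⟨x, hx⟩ => ?_
  have hf₂ : ContinuousOn (iteratedDerivWithin 2 f (Icc a (a + L))) (Icc a (a + L)) :=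
    hf.continuousOn_iteratedDerivWithin le_rfl (uniqueDiffOn_Icc hab)
  have h := abs_derivWithin_le_of_abs_le hab hf
    (fun _ hy => hf.continuousOn.abs.le_iSup_of_isCompact isCompact_Icc hy)
    (fun _ hy => hf₂.abs.le_iSup_of_isCompact isCompact_Icc hy) hx
  rwa [add_sub_cancel_left] at h
end

section
/- Let k ≥ 2 be an integer, a a real number, L > 0, and let f be of class C^k on [a, a+L]. Then for every j ∈ {1, …, k−1} we have sup_{a ≤ x ≤ a+L} |f^{(j)}(x)| ≤ ((2k)^{2k}/L^{j})·sup_{a ≤ x ≤ a+L} |f(x)| + L^{k−j}·sup_{a ≤ x ≤ a+L} |f^{(k)}(x)|. -/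
/-!
With step `h = L / i`, the `i`-th forward difference of `f` is a signed sum of `2 ^ i` values of `f`
(with multiplicity), hence at most `2 ^ i sup |f|`, while iterating the mean value theorem writes
it as `h ^ i f⁽ⁱ⁾(ξ)`. So `|f⁽ⁱ⁾(ξ)| ≤ (2i / L) ^ i sup |f|` at some point `ξ`, and the mean value
theorem for `f⁽ⁱ⁾` from `ξ` gives `L ^ i sup |f⁽ⁱ⁾| ≤ (2i) ^ i sup |f| + L ^ (i+1) sup |f⁽ⁱ⁺¹⁾|`.
These inequalities for `j ≤ i < k` telescope, and `∑_{i<k} (2i) ^ i ≤ (2k) ^ (2k)`.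
-/

open Set fwdDiff

section ForwardDifference

variable {h : ℝ}

theorem abs_fwdDiff_iter_le (hh : 0 ≤ h) (m : ℕ) {g : ℝ → ℝ} {c M : ℝ}
    (hg : ∀ x ∈ Icc c (c + m * h), |g x| ≤ M) : |((Δ_[h])^[m] g) c| ≤ 2 ^ m * M := by
  induction m generalizing g M with
  | zero => simpa using hg c (by simp)
  | succ m ih =>
    have hΔg : ∀ x ∈ Icc c (c + m * h), |Δ_[h] g x| ≤ 2 * M := fun x ⟨hcx, hxc⟩ => by
      have h₁ := hg (x + h) ⟨by linarith, by push_cast; linarith⟩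
      have h₂ := hg x ⟨hcx, by push_cast; linarith⟩
      exact (abs_sub _ _).trans (by linarith)
    rw [Function.iterate_succ_apply, pow_succ, mul_assoc]
    exact ih hΔg

theorem exists_fwdDiff_iter_eq_pow_mul (hh : 0 < h) (m : ℕ) {D : ℕ → ℝ → ℝ} {c : ℝ}
    (hcont : ∀ i ≤ m, ContinuousOn (D i) (Icc c (c + m * h)))
    (hderiv : ∀ i < m, ∀ x ∈ Ioo c (c + m * h), HasDerivAt (D i) (D (i + 1) x) x) :
    ∃ ξ ∈ Icc c (c + m * h), ((Δ_[h])^[m] (D 0)) c = h ^ m * D m ξ := by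
  induction m generalizing D with
  | zero => exact ⟨c, by simp, by simp⟩
  | succ m ih =>
    push_cast at hcont hderiv
    have hshift : MapsTo (· + h) (Icc c (c + m * h)) (Icc c (c + (m + 1) * h)) :=
      fun x ⟨hcx, hxc⟩ => ⟨by linarith, by linarith⟩
    have hsub : Icc c (c + m * h) ⊆ Icc c (c + (m + 1) * h) := Icc_subset_Icc le_rfl (by linarith)
    obtain ⟨ξ, ⟨hcξ, hξc⟩, hξ⟩ := ih (D := fun i => Δ_[h] (D i))
      (fun i hi => ((hcont i (by omega)).comp (by fun_prop) hshift).sub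
        ((hcont i (by omega)).mono hsub))
      (fun i hi x ⟨hcx, hxc⟩ => by
        have h₁ := hderiv i (by omega) (x + h) ⟨by linarith, by linarith⟩
        have h₂ := hderiv i (by omega) x ⟨hcx, by linarith⟩
        exact (h₁.comp_add_const x h).sub h₂)
    obtain ⟨ζ, ⟨hξζ, hζξ⟩, hζ⟩ := exists_hasDerivAt_eq_slope (D m) (D (m + 1))
      (lt_add_of_pos_right ξ hh) ((hcont m (by omega)).mono (Icc_subset_Icc hcξ (by linarith)))
      (fun x ⟨hξx, hxξ⟩ => hderiv m (by omega) x ⟨by linarith, by linarith⟩)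
    refine ⟨ζ, ⟨by linarith, by push_cast; linarith⟩, ?_⟩
    rw [Function.iterate_succ_apply, hξ, hζ, add_sub_cancel_left, pow_succ, mul_assoc,
      mul_div_cancel₀ _ hh.ne']
    rfl

end ForwardDifference

theorem ContDiffOn.hasDerivWithinAt_iteratedDerivWithin {𝕜 F : Type*} [NontriviallyNormedField 𝕜]
    [NormedAddCommGroup F] [NormedSpace 𝕜 F] {f : 𝕜 → F} {s : Set 𝕜} {n : WithTop ℕ∞} {i : ℕ}
    (hf : ContDiffOn 𝕜 n f s) (hs : UniqueDiffOn 𝕜 s) (hi : i < n) {x : 𝕜} (hx : x ∈ s) :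
    HasDerivWithinAt (iteratedDerivWithin i f s) (iteratedDerivWithin (i + 1) f s x) s x := by
  rw [iteratedDerivWithin_succ]
  exact ((hf.differentiableOn_iteratedDerivWithin hi hs) x hx).hasDerivWithinAt

theorem abs_le_abs_add_mul_of_hasDerivWithinAt_Icc {g g' : ℝ → ℝ} {a b C x ξ : ℝ}
    (hg : ∀ y ∈ Icc a b, HasDerivWithinAt g (g' y) (Icc a b) y)
    (hC : ∀ y ∈ Icc a b, |g' y| ≤ C) (hx : x ∈ Icc a b) (hξ : ξ ∈ Icc a b) :
    |g x| ≤ |g ξ| + C * (b - a) := by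
  have hmvt := (convex_Icc a b).norm_image_sub_le_of_norm_hasDerivWithin_le hg hC hξ hx
  have hC₀ : 0 ≤ C := (abs_nonneg _).trans (hC x hx)
  have hdist : |x - ξ| ≤ b - a := Real.dist_le_of_mem_Icc hx hξ
  calc |g x| ≤ |g ξ| + |g x - g ξ| := by linarith [abs_sub_abs_le_abs_sub (g x) (g ξ)]
    _ ≤ |g ξ| + C * |x - ξ| := by simpa only [Real.norm_eq_abs, add_le_add_iff_left] using hmvt
    _ ≤ |g ξ| + C * (b - a) := by gcongr

theorem abs_le_iSup_abs_of_continuousOn {g : ℝ → ℝ} {a b x : ℝ}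
    (hg : ContinuousOn g (Icc a b)) (hx : x ∈ Icc a b) :
    |g x| ≤ ⨆ y : Icc a b, |g y| := by
  have hbdd := (isCompact_Icc.image_of_continuousOn hg.abs).bddAbove
  rw [image_eq_range] at hbdd
  exact le_ciSup hbdd ⟨x, hx⟩

section Interval

variable {f : ℝ → ℝ} {a b : ℝ} {n : ℕ}

theorem exists_abs_iteratedDerivWithin_mul_pow_le (hab : a < b)
    (hf : ContDiffOn ℝ n f (Icc a b)) {M : ℝ} (hM : ∀ x ∈ Icc a b, |f x| ≤ M) :
    ∃ ξ ∈ Icc a b, |iteratedDerivWithin n f (Icc a b) ξ| * (b - a) ^ n ≤ (2 * n) ^ n * M := by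
  rcases Nat.eq_zero_or_pos n with rfl | hn
  · exact ⟨a, left_mem_Icc.2 hab.le, by simpa using hM a (left_mem_Icc.2 hab.le)⟩
  set h := (b - a) / n
  have hh : 0 < h := div_pos (by linarith) (by exact_mod_cast hn)
  have hend : a + n * h = b := by simp only [h]; field_simp; ring
  clear_value h
  have hU : UniqueDiffOn ℝ (Icc a b) := uniqueDiffOn_Icc hab
  obtain ⟨ξ, hξ, hΔ⟩ := exists_fwdDiff_iter_eq_pow_mul hh n
    (D := fun i => iteratedDerivWithin i f (Icc a b)) (c := a)
    (fun i hi => by rw [hend]; exact hf.continuousOn_iteratedDerivWithin (by exact_mod_cast hi) hU)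
    (fun i hi x hx => by
      rw [hend] at hx
      exact (hf.hasDerivWithinAt_iteratedDerivWithin hU (by exact_mod_cast hi)
        (Ioo_subset_Icc_self hx)).hasDerivAt (Icc_mem_nhds hx.1 hx.2))
  rw [hend] at hξ
  refine ⟨ξ, hξ, ?_⟩
  have hbound := abs_fwdDiff_iter_le hh.le n (g := iteratedDerivWithin 0 f (Icc a b))
    (c := a) (M := M) (by simpa [hend] using hM)
  rw [hΔ, abs_mul, abs_of_pos (pow_pos hh n)] at hbound
  have hba : b - a = n * h := by linarith
  calc |iteratedDerivWithin n f (Icc a b) ξ| * (b - a) ^ n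
      = (n : ℝ) ^ n * (h ^ n * |iteratedDerivWithin n f (Icc a b) ξ|) := by rw [hba]; ring
    _ ≤ (n : ℝ) ^ n * (2 ^ n * M) := by gcongr
    _ = (2 * n) ^ n * M := by ring

theorem abs_iteratedDerivWithin_le_iSup (hab : a < b) (hf : ContDiffOn ℝ n f (Icc a b))
    {i : ℕ} (hi : i ≤ n) {x : ℝ} (hx : x ∈ Icc a b) :
    |iteratedDerivWithin i f (Icc a b) x| ≤ ⨆ y : Icc a b, |iteratedDerivWithin i f (Icc a b) y| :=
  abs_le_iSup_abs_of_continuousOn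
    (hf.continuousOn_iteratedDerivWithin (by exact_mod_cast hi) (uniqueDiffOn_Icc hab)) hx

theorem pow_mul_iSup_abs_iteratedDerivWithin_le (hab : a < b) (hf : ContDiffOn ℝ n f (Icc a b))
    {i : ℕ} (hi : i < n) :
    (b - a) ^ i * ⨆ x : Icc a b, |iteratedDerivWithin i f (Icc a b) x| ≤
      (2 * i) ^ i * (⨆ x : Icc a b, |f x|) +
        (b - a) ^ (i + 1) * ⨆ x : Icc a b, |iteratedDerivWithin (i + 1) f (Icc a b) x| := by
  set D : ℕ → ℝ → ℝ := fun i => iteratedDerivWithin i f (Icc a b)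
  have : Nonempty (Icc a b) := (nonempty_Icc.2 hab.le).to_subtype
  obtain ⟨ξ, hξ, hsmall⟩ := exists_abs_iteratedDerivWithin_mul_pow_le hab
    (hf.of_le (by exact_mod_cast hi.le)) fun x hx => by
      simpa only [D, iteratedDerivWithin_zero] using abs_iteratedDerivWithin_le_iSup hab hf
        (Nat.zero_le n) hx
  rw [Real.mul_iSup_of_nonneg (by linarith [pow_pos (sub_pos.2 hab) i])]
  refine ciSup_le fun x => ?_
  have hx := abs_le_abs_add_mul_of_hasDerivWithinAt_Icc
    (fun y hy => hf.hasDerivWithinAt_iteratedDerivWithin (uniqueDiffOn_Icc hab)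
      (by exact_mod_cast hi) hy)
    (fun y hy => abs_iteratedDerivWithin_le_iSup hab hf hi hy) x.2 hξ
  have hba : 0 ≤ b - a := by linarith
  calc (b - a) ^ i * |D i x|
      ≤ (b - a) ^ i * (|D i ξ| + (⨆ y : Icc a b, |D (i + 1) y|) * (b - a)) := by gcongr
    _ = |D i ξ| * (b - a) ^ i + (b - a) ^ (i + 1) * ⨆ y : Icc a b, |D (i + 1) y| := by ring
    _ ≤ _ := by gcongr

end Interval

theorem le_sum_Ico_add_of_le_add_succ {N c : ℕ → ℝ} {j k : ℕ} (hjk : j ≤ k)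
    (h : ∀ i, j ≤ i → i < k → N i ≤ c i + N (i + 1)) :
    N j ≤ ∑ i ∈ Finset.Ico j k, c i + N k := by
  induction k, hjk using Nat.le_induction with
  | base => simp
  | succ k hjk ih =>
    rw [Finset.sum_Ico_succ_top hjk]
    linarith [ih fun i hji hik => h i hji (by omega), h k hjk (by omega)]

theorem sum_Ico_two_mul_pow_self_le (j k : ℕ) :
    ∑ i ∈ Finset.Ico j k, (2 * i) ^ i ≤ (2 * k) ^ (2 * k) := by
  rcases Nat.eq_zero_or_pos k with rfl | hk
  · simp
  have hterm : ∀ i ∈ Finset.Ico j k, (2 * i) ^ i ≤ (2 * k) ^ k := fun i hi => by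
    have hik := (Finset.mem_Ico.1 hi).2
    exact (Nat.pow_le_pow_left (by omega) i).trans (Nat.pow_le_pow_right (by omega) hik.le)
  have hcard : k - j ≤ (2 * k) ^ k :=
    calc k - j ≤ k := Nat.sub_le k j
      _ ≤ 2 ^ k := k.lt_two_pow_self.le
      _ ≤ (2 * k) ^ k := Nat.pow_le_pow_left (by omega) k
  calc ∑ i ∈ Finset.Ico j k, (2 * i) ^ i
      ≤ ∑ _i ∈ Finset.Ico j k, (2 * k) ^ k := Finset.sum_le_sum hterm
    _ = (k - j) * (2 * k) ^ k := by simp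
    _ ≤ (2 * k) ^ k * (2 * k) ^ k := Nat.mul_le_mul_right _ hcard
    _ = (2 * k) ^ (2 * k) := by ring

theorem stmt_10_general (k : ℕ) (a L : ℝ) (hL : 0 < L)
    (f : ℝ → ℝ) (hf : ContDiffOn ℝ k f (Set.Icc a (a + L))) :
    ∀ j, 1 ≤ j → j ≤ k - 1 →
      (⨆ x : Set.Icc a (a + L), |iteratedDerivWithin j f (Set.Icc a (a + L)) x|) ≤
        ((2*(k:ℝ)) ^ (2*k) / L ^ j) * (⨆ x : Set.Icc a (a + L), |f x|)
        + L ^ (k - j) * (⨆ x : Set.Icc a (a + L), |iteratedDerivWithin k f (Set.Icc a (a + L)) x|) := by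
  intro j _ hjk
  have hI : a < a + L := by linarith
  set M : ℕ → ℝ := fun i => ⨆ x : Icc a (a + L), |iteratedDerivWithin i f (Icc a (a + L)) x|
  have hM0 : M 0 = ⨆ x : Icc a (a + L), |f x| := by simp only [M, iteratedDerivWithin_zero]
  have htel := le_sum_Ico_add_of_le_add_succ (N := fun i => L ^ i * M i)
    (c := fun i => (2 * i) ^ i * M 0) (j := j) (k := k) (by omega) fun i _ hi => by
      simpa only [add_sub_cancel_left, hM0] using pow_mul_iSup_abs_iteratedDerivWithin_le hI hf hi
  have hsum : ∑ i ∈ Finset.Ico j k, (2 * (i : ℝ)) ^ i * M 0 ≤ (2 * (k : ℝ)) ^ (2 * k) * M 0 := by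
    rw [← Finset.sum_mul]
    gcongr
    · exact Real.iSup_nonneg fun _ => abs_nonneg _
    · exact_mod_cast sum_Ico_two_mul_pow_self_le j k
  have hLk : L ^ k = L ^ j * L ^ (k - j) := by rw [← pow_add]; congr 1; omega
  rw [← hM0, ← mul_le_mul_iff_right₀ (pow_pos hL j)]
  calc L ^ j * M j ≤ (2 * (k : ℝ)) ^ (2 * k) * M 0 + L ^ k * M k := by linarith
    _ = L ^ j * ((2 * k) ^ (2 * k) / L ^ j * M 0 + L ^ (k - j) * M k) := by
      rw [hLk]; field_simp

theorem stmt_10 (k : ℕ) (hk : 2 ≤ k) (a L : ℝ) (hL : 0 < L)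
    (f : ℝ → ℝ) (hf : ContDiffOn ℝ k f (Set.Icc a (a + L))) :
    ∀ j, 1 ≤ j → j ≤ k - 1 →
      (⨆ x : Set.Icc a (a + L), |iteratedDerivWithin j f (Set.Icc a (a + L)) x|) ≤
        ((2*(k:ℝ)) ^ (2*k) / L ^ j) * (⨆ x : Set.Icc a (a + L), |f x|)
        + L ^ (k - j) * (⨆ x : Set.Icc a (a + L), |iteratedDerivWithin k f (Set.Icc a (a + L)) x|) :=
  stmt_10_general k a L hL f hf
end

section
/- Let k ≥ 3 be an integer and a > e(k−1) a real number. Then Σ_{j=1}^{k−1} (a/j)^{2j} ≤ e²·k·(a/k)^{2k−2}. -/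
/-!
For `1 ≤ j ≤ m` and `a ≥ e m`, the inequality `(m / j) ^ j ≤ e ^ (m - j)` gives
`(a / j) ^ j ≤ (a / m) ^ m`, so every term of the sum is at most its last one and the sum is at most
`m (a / m) ^ (2m)`. Passing from `m = k - 1` to `k` costs the factor `((m + 1) / m) ^ (2m) ≤ e²`.
-/

open Real Finset

namespace Real

lemma div_pow_le_exp_sub {x : ℝ} (hx : 0 ≤ x) {n : ℕ} (hn : n ≠ 0) :
    (x / n) ^ n ≤ exp (x - n) := by
  have h := one_sub_div_pow_le_exp_neg (n := n) (t := n - x) (by linarith)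
  have hn' : (n : ℝ) ≠ 0 := Nat.cast_ne_zero.mpr hn
  rwa [show 1 - (n - x) / n = x / n by field_simp; ring, neg_sub] at h

lemma div_pow_le_div_pow_of_exp_mul_le {a : ℝ} {j m : ℕ} (hj : j ≠ 0) (hjm : j ≤ m)
    (ha : exp 1 * m ≤ a) : (a / j) ^ j ≤ (a / m) ^ m := by
  have hm : (0 : ℝ) < m := by exact_mod_cast (Nat.pos_of_ne_zero hj).trans_le hjm
  have hj' : (j : ℝ) ≠ 0 := Nat.cast_ne_zero.mpr hj
  have he : exp 1 ≤ a / m := (le_div_iff₀ hm).mpr (by linarith)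
  have hratio : (m / j : ℝ) ^ j ≤ (a / m) ^ (m - j) :=
    calc (m / j : ℝ) ^ j ≤ exp ((m : ℝ) - j) := div_pow_le_exp_sub hm.le hj
      _ = exp 1 ^ (m - j) := by rw [← exp_nat_mul, Nat.cast_sub hjm, mul_one]
      _ ≤ (a / m) ^ (m - j) := by gcongr
  calc (a / j) ^ j = (a / m) ^ j * (m / j : ℝ) ^ j := by
        rw [← mul_pow]; congr 1; field_simp
    _ ≤ (a / m) ^ j * (a / m) ^ (m - j) :=
        mul_le_mul_of_nonneg_left hratio (pow_nonneg ((exp_pos 1).le.trans he) j)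
    _ = (a / m) ^ m := by rw [← pow_add, Nat.add_sub_cancel' hjm]

lemma sum_Icc_div_pow_two_mul_le {a : ℝ} {m : ℕ} (ha : exp 1 * m ≤ a) :
    ∑ j ∈ Icc 1 m, (a / j) ^ (2 * j) ≤ m * (a / m) ^ (2 * m) := by
  have ha₀ : 0 ≤ a := (mul_nonneg (exp_pos 1).le m.cast_nonneg).trans ha
  calc ∑ j ∈ Icc 1 m, (a / j) ^ (2 * j) ≤ ∑ _j ∈ Icc 1 m, (a / m) ^ (2 * m) := by
        refine sum_le_sum fun j hj ↦ ?_
        obtain ⟨hj1, hjm⟩ := mem_Icc.mp hj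
        simp only [pow_mul']
        gcongr
        exact div_pow_le_div_pow_of_exp_mul_le (by omega) hjm ha
    _ = m * (a / m) ^ (2 * m) := by simp

lemma div_pow_two_mul_le_exp_sq_mul {a : ℝ} {m : ℕ} (hm : m ≠ 0) :
    (a / m) ^ (2 * m) ≤ exp 1 ^ 2 * (a / (m + 1)) ^ (2 * m) := by
  have hm' : (m : ℝ) ≠ 0 := Nat.cast_ne_zero.mpr hm
  have hsplit : a / m = (1 + (m : ℝ)⁻¹) * (a / (m + 1)) := by field_simp
  rw [hsplit, mul_pow]
  refine mul_le_mul_of_nonneg_right ?_ ((even_two_mul m).pow_nonneg _)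
  rw [pow_mul']
  gcongr
  exact one_add_inv_pow_le_exp

end Real

theorem stmt_12_general (k : ℕ) (a : ℝ) (ha : a > Real.exp 1 * ((k:ℝ) - 1)) :
    ∑ j ∈ Finset.Icc 1 (k - 1), (a / (j:ℝ)) ^ (2*j) ≤
      Real.exp 1 ^ 2 * (k:ℝ) * (a / (k:ℝ)) ^ (2*k - 2) := by
  obtain _ | _ | m := k
  · simp
  · simpa using (exp_pos 2).le
  have ham : exp 1 * (m + 1 : ℕ) ≤ a := by push_cast at ha ⊢; linarith
  rw [show 2 * (m + 2) - 2 = 2 * (m + 1) by omega, Nat.add_sub_cancel]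
  calc ∑ j ∈ Icc 1 (m + 1), (a / j) ^ (2 * j)
      ≤ (m + 1 : ℕ) * (a / (m + 1 : ℕ)) ^ (2 * (m + 1)) := sum_Icc_div_pow_two_mul_le ham
    _ ≤ (m + 1 : ℕ) * (exp 1 ^ 2 * (a / (m + 2 : ℕ)) ^ (2 * (m + 1))) := by
        gcongr
        exact_mod_cast div_pow_two_mul_le_exp_sq_mul (a := a) (m := m + 1) (by omega)
    _ ≤ exp 1 ^ 2 * (m + 2 : ℕ) * (a / (m + 2 : ℕ)) ^ (2 * (m + 1)) := by
        rw [mul_left_comm, ← mul_assoc]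
        gcongr
        · exact (even_two_mul _).pow_nonneg _
        · omega

theorem stmt_12 (k : ℕ) (hk : 3 ≤ k) (a : ℝ) (ha : a > Real.exp 1 * ((k:ℝ) - 1)) :
    ∑ j ∈ Finset.Icc 1 (k - 1), (a / (j:ℝ)) ^ (2*j) ≤
      Real.exp 1 ^ 2 * (k:ℝ) * (a / (k:ℝ)) ^ (2*k - 2) :=
  stmt_12_general k a ha
end

section
/- Let k ≥ 3 be an integer, N ≥ 4 an integer, and 0 < δ < 1/4. Let f be of class C^k on [N, 2N] such that there exist λ_k > 0 and c_k ≥ 1 with λ_k ≤ |f^{(k)}(x)| ≤ c_k·λ_k for all x ∈ [N, 2N]. Let P be a real polynomial of degree < k, let C_δ = {(x,y) ∈ [N,2N] × ℝ : |y − f(x)| < δ}, and let C_P = {(x,y) ∈ ℝ² : y = P(x)} be the graph of P. Then the set C_δ ∩ C_P has at most k connected components. -/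
/-!
Put `g = P - f`. Since `deg P < k`, `g⁽ᵏ⁾ = -f⁽ᵏ⁾` vanishes nowhere on `[N, 2N]`. The set
`C_δ ∩ C_P` is the graph of `P` over `T = {x ∈ [N, 2N] : |g x| < δ}`, so it has as many
components as `T`. Between two points of `T` lying in different components, `|g|` reaches `δ`,
so `g` has an interior local extremum there and `g'` vanishes. Thus `k + 1` components would
give `k` increasing zeros of `g'`, and Rolle's theorem applied `k - 1` more times would give a
zero of `g⁽ᵏ⁾`.
-/

open Set Function Polynomial

namespace Polynomial

variable {𝕜 : Type*} [NontriviallyNormedField 𝕜]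

theorem contDiff_eval (p : 𝕜[X]) (n : WithTop ℕ∞) : ContDiff 𝕜 n fun x => p.eval x := by
  simpa using p.contDiff_aeval (𝕜 := 𝕜) n

theorem iteratedDeriv_eval (p : 𝕜[X]) (n : ℕ) :
    iteratedDeriv n (fun x => p.eval x) = fun x => (derivative^[n] p).eval x := by
  induction n generalizing p with
  | zero => simp
  | succ n ih =>
    have hderiv : _root_.deriv (fun x => p.eval x) = fun x => p.derivative.eval x := by
      ext x
      exact p.deriv
    rw [iteratedDeriv_succ', hderiv, ih, iterate_succ_apply]

theorem iteratedDerivWithin_eval_eq_zero {p : 𝕜[X]} {n : ℕ} (hp : p.degree < n) {s : Set 𝕜}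
    (hs : UniqueDiffOn 𝕜 s) {x : 𝕜} (hx : x ∈ s) :
    iteratedDerivWithin n (fun x => p.eval x) s x = 0 := by
  rw [iteratedDerivWithin_eq_iteratedDeriv hs (p.contDiff_eval n).contDiffAt hx,
    iteratedDeriv_eval, iterate_derivative_eq_zero_of_degree_lt hp]
  simp

theorem iteratedDerivWithin_eval_sub {p : 𝕜[X]} {n : ℕ} (hp : p.degree < n) {f : 𝕜 → 𝕜}
    {s : Set 𝕜} (hs : UniqueDiffOn 𝕜 s) {x : 𝕜} (hx : x ∈ s)
    (hf : ContDiffWithinAt 𝕜 n f s x) :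
    iteratedDerivWithin n (fun y => p.eval y - f y) s x = -iteratedDerivWithin n f s x := by
  rw [show (fun y => p.eval y - f y) = (fun y => p.eval y) - f from rfl,
    iteratedDerivWithin_sub hx hs (p.contDiff_eval n).contDiffWithinAt hf,
    iteratedDerivWithin_eval_eq_zero hp hs hx, zero_sub]

end Polynomial

theorem strictMono_of_mem_Ioo_castSucc_succ {α : Type*} [Preorder α] {n : ℕ}
    {x : Fin (n + 2) → α} {y : Fin (n + 1) → α}
    (hy : ∀ i, y i ∈ Ioo (x i.castSucc) (x i.succ)) : StrictMono y :=
  Fin.strictMono_iff_lt_succ.2 fun i =>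
    ((hy i.castSucc).2.trans_eq (by rw [Fin.succ_castSucc])).trans (hy i.succ).1

theorem exists_mem_Ioo_isLocalExtr_of_abs_lt {g : ℝ → ℝ} {p q z : ℝ}
    (hg : ContinuousOn g (Icc p q)) (hz : z ∈ Icc p q) (hp : |g p| < |g z|) (hq : |g q| < |g z|) :
    ∃ M ∈ Ioo p q, IsLocalExtr g M := by
  obtain ⟨M, hM, hmax⟩ := isCompact_Icc.exists_isMaxOn ⟨z, hz⟩ hg.abs
  have hzM : |g z| ≤ |g M| := hmax hz
  have hMpq : M ∈ Ioo p q :=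
    ⟨hM.1.lt_of_ne (by rintro rfl; linarith), hM.2.lt_of_ne (by rintro rfl; linarith)⟩
  have hnhds : Icc p q ∈ nhds M := Icc_mem_nhds hMpq.1 hMpq.2
  refine ⟨M, hMpq, ?_⟩
  rcases le_or_gt 0 (g M) with hpos | hneg
  · refine .inr (IsMaxOn.isLocalMax (fun x hx => ?_) hnhds)
    have := hmax hx
    simp only [mem_ofPred_eq, abs_of_nonneg hpos] at this ⊢
    exact (le_abs_self _).trans this
  · refine .inl (IsMinOn.isLocalMin (fun x hx => ?_) hnhds)
    have := hmax hx
    simp only [mem_ofPred_eq, abs_of_neg hneg] at this ⊢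
    linarith [neg_abs_le (g x)]

theorem exists_iteratedDerivWithin_eq_zero_of_strictMono {h : ℝ → ℝ} {a b : ℝ} {n : ℕ}
    (hh : ContDiffOn ℝ n h (Icc a b)) {x : Fin (n + 1) → ℝ} (hx : StrictMono x)
    (hxI : ∀ i, x i ∈ Icc a b) (hzero : ∀ i, h (x i) = 0) :
    ∃ y ∈ Icc a b, iteratedDerivWithin n h (Icc a b) y = 0 := by
  induction n generalizing h with
  | zero => exact ⟨x 0, hxI 0, by simpa using hzero 0⟩
  | succ n ih =>
    have hab : a < b := ((hxI 0).1.trans_lt (hx Fin.zero_lt_one)).trans_le (hxI 1).2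
    have hrolle : ∀ i : Fin (n + 1), ∃ y ∈ Ioo (x i.castSucc) (x i.succ),
        derivWithin h (Icc a b) y = 0 := by
      intro i
      have hsub : Icc (x i.castSucc) (x i.succ) ⊆ Icc a b :=
        Icc_subset_Icc (hxI _).1 (hxI _).2
      obtain ⟨y, hy, hy0⟩ := exists_deriv_eq_zero (hx (Fin.castSucc_lt_succ (i := i)))
        (hh.continuousOn.mono hsub) ((hzero _).trans (hzero _).symm)
      refine ⟨y, hy, ?_⟩
      rwa [derivWithin_of_mem_nhds (Filter.mem_of_superset (Icc_mem_nhds hy.1 hy.2) hsub)]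
    choose y hy hy0 using hrolle
    obtain ⟨z, hz, hz0⟩ := ih (hh.derivWithin (uniqueDiffOn_Icc hab) (by norm_cast))
      (strictMono_of_mem_Ioo_castSucc_succ hy)
      (fun i => Icc_subset_Icc (hxI _).1 (hxI _).2 (Ioo_subset_Icc_self (hy i))) hy0
    exact ⟨z, hz, by rwa [iteratedDerivWithin_succ']⟩

theorem exists_strictMono_of_le_encard_image {α β : Type*} [LinearOrder α] {π : α → β}
    {s : Set α} {n : ℕ} (h : n ≤ (π '' s).encard) :
    ∃ x : Fin n → α, StrictMono x ∧ (∀ i, x i ∈ s) ∧ Injective (π ∘ x) := by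
  obtain ⟨t, hts, hinj, himage⟩ := (surjOn_image π s).exists_subset_injOn_image_eq
  obtain ⟨u, hut, hu⟩ := exists_subset_encard_eq (h.trans_eq (himage ▸ hinj.encard_image))
  have hfin : u.Finite := finite_of_encard_eq_coe hu
  have hcard : hfin.toFinset.card = n := by
    rw [← ENat.natCast_inj, ← hu, hfin.encard_eq_coe_toFinset_card]
  let x := hfin.toFinset.orderEmbOfFin hcard
  have hxu : ∀ i, x i ∈ u := fun i =>
    hfin.mem_toFinset.1 (hfin.toFinset.orderEmbOfFin_mem hcard i)
  exact ⟨x, x.strictMono, fun i => hts (hut (hxu i)),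
    fun i j hij => x.injective (hinj (hut (hxu i)) (hut (hxu j)) hij)⟩

theorem exists_mem_Icc_notMem_of_connectedComponentIn_ne {α : Type*}
    [ConditionallyCompleteLinearOrder α] [TopologicalSpace α] [OrderTopology α] [DenselyOrdered α]
    {T : Set α} {p q : α} (hpq : p ≤ q)
    (hne : connectedComponentIn T p ≠ connectedComponentIn T q) :
    ∃ z ∈ Icc p q, z ∉ T := by
  by_contra! hsub
  exact hne (connectedComponentIn_eq (isPreconnected_Icc.subset_connectedComponentIn
    (left_mem_Icc.2 hpq) hsub (right_mem_Icc.2 hpq)))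

theorem encard_connectedComponentIn_image_le_of_iteratedDerivWithin_ne_zero {g : ℝ → ℝ}
    {a b δ : ℝ} {n : ℕ}
    (hg : ContDiffOn ℝ (n + 1) g (Icc a b))
    (hne : ∀ x ∈ Icc a b, iteratedDerivWithin (n + 1) g (Icc a b) x ≠ 0) :
    (connectedComponentIn {x | x ∈ Icc a b ∧ |g x| < δ} ''
      {x | x ∈ Icc a b ∧ |g x| < δ}).encard ≤ n + 1 := by
  set T := {x | x ∈ Icc a b ∧ |g x| < δ}
  by_contra! hlt
  obtain ⟨x, hx, hxT, hinj⟩ := exists_strictMono_of_le_encard_image (n := n + 2)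
    (Order.add_one_le_of_lt hlt)
  have hab : a < b := ((hxT 0).1.1.trans_lt (hx Fin.zero_lt_one)).trans_le (hxT 1).1.2
  have hcrit : ∀ i : Fin (n + 1), ∃ M ∈ Ioo (x i.castSucc) (x i.succ),
      derivWithin g (Icc a b) M = 0 := by
    intro i
    have hlt : x i.castSucc < x i.succ := hx Fin.castSucc_lt_succ
    have hsub : Icc (x i.castSucc) (x i.succ) ⊆ Icc a b := Icc_subset_Icc (hxT _).1.1 (hxT _).1.2
    obtain ⟨z, hz, hzT⟩ := exists_mem_Icc_notMem_of_connectedComponentIn_ne hlt.le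
      (hinj.ne Fin.castSucc_lt_succ.ne)
    have hδz : δ ≤ |g z| := not_lt.1 fun h => hzT ⟨hsub hz, h⟩
    obtain ⟨M, hM, hextr⟩ := exists_mem_Ioo_isLocalExtr_of_abs_lt (hg.continuousOn.mono hsub) hz
      ((hxT _).2.trans_le hδz) ((hxT _).2.trans_le hδz)
    refine ⟨M, hM, ?_⟩
    rw [derivWithin_of_mem_nhds (Filter.mem_of_superset (Icc_mem_nhds hM.1 hM.2) hsub)]
    exact hextr.deriv_eq_zero
  choose M hM hM0 using hcrit
  obtain ⟨y, hy, hy0⟩ := exists_iteratedDerivWithin_eq_zero_of_strictMono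
    (hg.derivWithin (uniqueDiffOn_Icc hab) le_rfl) (strictMono_of_mem_Ioo_castSucc_succ hM)
    (fun i => Icc_subset_Icc (hxT _).1.1 (hxT _).1.2 (Ioo_subset_Icc_self (hM i))) hM0
  exact hne y hy (by rwa [iteratedDerivWithin_succ'])

theorem Function.LeftInverse.image_connectedComponentIn {X Y : Type*} [TopologicalSpace X]
    [TopologicalSpace Y] {φ : X → Y} {ψ : Y → X} (hψφ : LeftInverse ψ φ) {s : Set X}
    (hφ : ContinuousOn φ s) (hψ : ContinuousOn ψ (φ '' s)) {x : X} (hx : x ∈ s) :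
    φ '' connectedComponentIn s x = connectedComponentIn (φ '' s) (φ x) := by
  refine (hφ.image_connectedComponentIn_subset hx).antisymm fun y hy => ?_
  obtain ⟨t, -, rfl⟩ := connectedComponentIn_subset _ _ hy
  refine ⟨t, ?_, rfl⟩
  have := hψ.image_connectedComponentIn_subset (mem_image_of_mem φ hx) (mem_image_of_mem ψ hy)
  rwa [hψφ, hψφ, hψφ.image_image] at this

theorem Function.LeftInverse.encard_connectedComponentIn_image {X Y : Type*}
    [TopologicalSpace X] [TopologicalSpace Y] {φ : X → Y} {ψ : Y → X} (hψφ : LeftInverse ψ φ)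
    {s : Set X} (hφ : ContinuousOn φ s) (hψ : ContinuousOn ψ (φ '' s)) :
    (connectedComponentIn (φ '' s) '' (φ '' s)).encard =
      (connectedComponentIn s '' s).encard := by
  rw [Set.image_image, ← image_congr fun x hx => hψφ.image_connectedComponentIn hφ hψ hx,
    ← Set.image_image, (image_injective.2 hψφ.injective).encard_image]

theorem stmt_13_general (k N : ℕ) (hk : 3 ≤ k) (hN : 4 ≤ N)
    (δ : ℝ) (f : ℝ → ℝ) (lam c : ℝ) (hlam : 0 < lam)
    (hf : ContDiffOn ℝ k f (Set.Icc (N:ℝ) (2*N)))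
    (hder : ∀ x ∈ Set.Icc (N:ℝ) (2*N),
      lam ≤ |iteratedDerivWithin k f (Set.Icc (N:ℝ) (2*N)) x| ∧
      |iteratedDerivWithin k f (Set.Icc (N:ℝ) (2*N)) x| ≤ c * lam)
    (P : Polynomial ℝ) (hdeg : P.degree < (k : WithBot ℕ)) :
    ∃ C : Finset (Set (ℝ × ℝ)), C.card ≤ k ∧
      ∀ p ∈ {q : ℝ × ℝ | q.1 ∈ Set.Icc (N:ℝ) (2*N) ∧ |q.2 - f q.1| < δ ∧ q.2 = P.eval q.1},
        connectedComponentIn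
          {q : ℝ × ℝ | q.1 ∈ Set.Icc (N:ℝ) (2*N) ∧ |q.2 - f q.1| < δ ∧ q.2 = P.eval q.1} p ∈ C := by
  obtain ⟨n, rfl⟩ : ∃ n, k = n + 1 := ⟨k - 1, by omega⟩
  set I := Icc (N : ℝ) (2 * N)
  have hI : UniqueDiffOn ℝ I := uniqueDiffOn_Icc (by
    have : (4 : ℝ) ≤ N := by exact_mod_cast hN
    linarith)
  set g : ℝ → ℝ := fun x => P.eval x - f x
  have hg : ContDiffOn ℝ (n + 1) g I := (P.contDiff_eval _).contDiffOn.sub (by exact_mod_cast hf)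
  have hgk : ∀ x ∈ I, iteratedDerivWithin (n + 1) g I x ≠ 0 := fun x hx => by
    rw [← abs_pos, iteratedDerivWithin_eval_sub hdeg hI hx (hf x hx), abs_neg]
    exact hlam.trans_le (hder x hx).1
  let φ : ℝ → ℝ × ℝ := fun x => (x, P.eval x)
  have hgraph : {q : ℝ × ℝ | q.1 ∈ I ∧ |q.2 - f q.1| < δ ∧ q.2 = P.eval q.1} =
      φ '' {x | x ∈ I ∧ |g x| < δ} := by
    ext ⟨x, y⟩
    simp only [mem_ofPred_eq, mem_image, Prod.mk.injEq, φ, g]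
    grind
  have hcount :=
    encard_connectedComponentIn_image_le_of_iteratedDerivWithin_ne_zero (δ := δ) hg hgk
  rw [← LeftInverse.encard_connectedComponentIn_image (φ := φ) (ψ := Prod.fst) (fun _ => rfl)
    (continuous_id.prodMk P.continuous).continuousOn continuous_fst.continuousOn, ← hgraph]
    at hcount
  obtain ⟨hfin, hcard⟩ := encard_le_coe_iff_finite_ncard_le.1 hcount
  exact ⟨hfin.toFinset, by rwa [← ncard_eq_toFinset_card _ hfin],
    fun p hp => hfin.mem_toFinset.2 (mem_image_of_mem _ hp)⟩

theorem stmt_13 (k N : ℕ) (hk : 3 ≤ k) (hN : 4 ≤ N)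
    (δ : ℝ) (hδ0 : 0 < δ) (hδ1 : δ < 1/4)
    (f : ℝ → ℝ) (lam c : ℝ) (hlam : 0 < lam) (hc : 1 ≤ c)
    (hf : ContDiffOn ℝ k f (Set.Icc (N:ℝ) (2*N)))
    (hder : ∀ x ∈ Set.Icc (N:ℝ) (2*N),
      lam ≤ |iteratedDerivWithin k f (Set.Icc (N:ℝ) (2*N)) x| ∧
      |iteratedDerivWithin k f (Set.Icc (N:ℝ) (2*N)) x| ≤ c * lam)
    (P : Polynomial ℝ) (hdeg : P.degree < (k : WithBot ℕ)) :
    ∃ C : Finset (Set (ℝ × ℝ)), C.card ≤ k ∧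
      ∀ p ∈ {q : ℝ × ℝ | q.1 ∈ Set.Icc (N:ℝ) (2*N) ∧ |q.2 - f q.1| < δ ∧ q.2 = P.eval q.1},
        connectedComponentIn
          {q : ℝ × ℝ | q.1 ∈ Set.Icc (N:ℝ) (2*N) ∧ |q.2 - f q.1| < δ ∧ q.2 = P.eval q.1} p ∈ C :=
  stmt_13_general k N hk hN δ f lam c hlam hf hder P hdeg
end
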